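/- arXiv:2202.10825 — 6 statements merged into one kernel-verified Lean document; each statement's English description precedes it below -/
import Mathlib

section
/- Let h > 0, N a positive integer, μ ∈ ℝ, and c = e^μ h / (8(N+1)^2). Then the function V(y) = μ − 2 log(1 + c |y^{N+1} − e₁|^2), where y is identified with a complex number and e₁ = 1 ∈ ℂ, satisfies ΔV + h |y|^{2N} e^V = 0 on ℝ². -/
/-!
Write `V = φ ∘ u` with `u = ‖f‖²`, `f y = y ^ (N + 1) - 1` entire, and `φ t = μ - 2 log (1 + c t)`.
The chain rule gives `ΔV = φ''(u) |∇u|² + φ'(u) Δu`, and for holomorphic `f` one has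
`Δ‖f‖² = 4 ‖f'‖²` and `|∇‖f‖²|² = 4 ‖f‖² ‖f'‖²`, whence the Liouville identity
`ΔV = -8 c ‖f'‖² / (1 + c ‖f‖²)²`. Since `‖f'‖² = (N + 1)² ‖y‖^(2N)`,
`e^V = e^μ / (1 + c ‖f‖²)²` and `8 c (N + 1)² = h e^μ`, the two terms cancel.
-/

/-- The Laplacian of `f : ℂ → ℝ`, with `ℂ ≅ ℝ²`. -/
noncomputable def lap (f : ℂ → ℝ) (z : ℂ) : ℝ :=
  fderiv ℝ (fun w => fderiv ℝ f w 1) z 1 +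
  fderiv ℝ (fun w => fderiv ℝ f w Complex.I) z Complex.I

open Complex ComplexConjugate
open scoped InnerProductSpace

section ChainRule

variable {φ φ' : ℝ → ℝ} {φ'' : ℝ} {u : ℂ → ℝ} {z : ℂ}

lemma fderiv_fderiv_comp_apply_apply {v : ℂ} (hφ : ∀ w, HasDerivAt φ (φ' (u w)) (u w))
    (hφ' : HasDerivAt φ' φ'' (u z)) (hu : Differentiable ℝ u)
    (hu' : DifferentiableAt ℝ (fun w => fderiv ℝ u w v) z) :
    fderiv ℝ (fun w => fderiv ℝ (φ ∘ u) w v) z v =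
      φ'' * fderiv ℝ u z v ^ 2 + φ' (u z) * fderiv ℝ (fun w => fderiv ℝ u w v) z v := by
  have hfirst : (fun w => fderiv ℝ (φ ∘ u) w v) = fun w => φ' (u w) * fderiv ℝ u w v := by
    funext w
    rw [((hφ w).comp_hasFDerivAt w (hu w).hasFDerivAt).fderiv]
    rfl
  have hprod : HasFDerivAt (fun w => φ' (u w) * fderiv ℝ u w v)
      (φ' (u z) • fderiv ℝ (fun w => fderiv ℝ u w v) z + fderiv ℝ u z v • φ'' • fderiv ℝ u z) z :=
    (hφ'.comp_hasFDerivAt z (hu z).hasFDerivAt).mul hu'.hasFDerivAt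
  rw [hfirst, hprod.fderiv]
  simp only [add_apply, smul_apply, smul_eq_mul]
  ring

lemma lap_comp (hφ : ∀ w, HasDerivAt φ (φ' (u w)) (u w)) (hφ' : HasDerivAt φ' φ'' (u z))
    (hu : Differentiable ℝ u) (hu₁ : DifferentiableAt ℝ (fun w => fderiv ℝ u w 1) z)
    (huI : DifferentiableAt ℝ (fun w => fderiv ℝ u w I) z) :
    lap (φ ∘ u) z =
      φ'' * (fderiv ℝ u z 1 ^ 2 + fderiv ℝ u z I ^ 2) + φ' (u z) * lap u z := by
  rw [lap, lap, fderiv_fderiv_comp_apply_apply hφ hφ' hu hu₁,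
    fderiv_fderiv_comp_apply_apply hφ hφ' hu huI]
  ring

end ChainRule

section NormSq

variable {f : ℂ → ℂ}

lemma fderiv_norm_sq_comp_apply (hf : Differentiable ℂ f) (w v : ℂ) :
    fderiv ℝ (fun w => ‖f w‖ ^ 2) w v = 2 * ⟪f w, deriv f w * v⟫_ℝ := by
  rw [((hf w).hasDerivAt.hasFDerivAt.restrictScalars ℝ).norm_sq.fderiv]
  simp only [smul_apply, ContinuousLinearMap.comp_apply, innerSL_apply_apply,
    ContinuousLinearMap.coe_restrictScalars', ContinuousLinearMap.toSpanSingleton_apply, smul_eq_mul,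
    nsmul_eq_mul, Nat.cast_ofNat, mul_comm v]

lemma fderiv_fderiv_norm_sq_comp_apply_apply (hf : Differentiable ℂ f) (z v : ℂ) :
    fderiv ℝ (fun w => fderiv ℝ (fun w => ‖f w‖ ^ 2) w v) z v =
      2 * (⟪f z, deriv (deriv f) z * v * v⟫_ℝ + ‖deriv f z * v‖ ^ 2) := by
  simp_rw [fderiv_norm_sq_comp_apply hf]
  rw [((((hf z).hasDerivAt.hasFDerivAt.restrictScalars ℝ).inner ℝ
    (((hf.deriv z).hasDerivAt.mul_const v).hasFDerivAt.restrictScalars ℝ)).const_mul 2).fderiv]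
  simp only [smul_apply, ContinuousLinearMap.comp_apply, fderivInnerCLM_apply,
    ContinuousLinearMap.prod_apply, ContinuousLinearMap.coe_restrictScalars',
    ContinuousLinearMap.toSpanSingleton_apply, smul_eq_mul, real_inner_self_eq_norm_sq, mul_comm v]

lemma differentiable_fderiv_norm_sq_comp_apply (hf : Differentiable ℂ f) (v : ℂ) :
    Differentiable ℝ (fun w => fderiv ℝ (fun w => ‖f w‖ ^ 2) w v) := by
  simp_rw [fderiv_norm_sq_comp_apply hf]
  exact ((hf.restrictScalars ℝ).inner ℝ ((hf.deriv.mul_const v).restrictScalars ℝ)).const_mul 2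

lemma lap_norm_sq_comp (hf : Differentiable ℂ f) (z : ℂ) :
    lap (fun w => ‖f w‖ ^ 2) z = 4 * ‖deriv f z‖ ^ 2 := by
  rw [lap, fderiv_fderiv_norm_sq_comp_apply_apply hf, fderiv_fderiv_norm_sq_comp_apply_apply hf]
  simp only [mul_one, mul_assoc _ I, I_mul_I, mul_neg_one, inner_neg_right, norm_mul, norm_I]
  ring

lemma fderiv_norm_sq_comp_one_sq_add_I_sq (hf : Differentiable ℂ f) (z : ℂ) :
    fderiv ℝ (fun w => ‖f w‖ ^ 2) z 1 ^ 2 + fderiv ℝ (fun w => ‖f w‖ ^ 2) z I ^ 2 =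
      4 * ‖f z‖ ^ 2 * ‖deriv f z‖ ^ 2 := by
  set a := deriv f z * conj (f z)
  have hnorm : a.re * a.re + a.im * a.im = ‖f z‖ ^ 2 * ‖deriv f z‖ ^ 2 := by
    rw [← normSq_apply, ← Complex.sq_norm, norm_mul, RCLike.norm_conj]
    ring
  rw [fderiv_norm_sq_comp_apply hf, fderiv_norm_sq_comp_apply hf, Complex.inner, Complex.inner,
    mul_one, mul_right_comm _ I, mul_I_re]
  linear_combination 4 * hnorm

end NormSq

lemma lap_const_sub_two_mul_log_one_add_mul_norm_sq {f : ℂ → ℂ} (hf : Differentiable ℂ f)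
    {c : ℝ} (hc : 0 ≤ c) (μ : ℝ) (z : ℂ) :
    lap (fun w => μ - 2 * Real.log (1 + c * ‖f w‖ ^ 2)) z =
      -8 * c * ‖deriv f z‖ ^ 2 / (1 + c * ‖f z‖ ^ 2) ^ 2 := by
  set u : ℂ → ℝ := fun w => ‖f w‖ ^ 2
  have hpos (w : ℂ) : 0 < 1 + c * u w := by positivity
  have hφ (w : ℂ) : HasDerivAt (fun t => μ - 2 * Real.log (1 + c * t))
      (-2 * c / (1 + c * u w)) (u w) := by
    refine (((((hasDerivAt_id' (u w)).const_mul c).const_add 1).log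
      (hpos w).ne').const_mul 2 |>.const_sub μ).congr_deriv ?_
    ring
  have hφ' : HasDerivAt (fun t => -2 * c / (1 + c * t))
      (2 * c ^ 2 / (1 + c * u z) ^ 2) (u z) := by
    refine ((((hasDerivAt_id' (u z)).const_mul c).const_add 1).inv
      (hpos z).ne' |>.const_mul (-2 * c)).congr_deriv ?_
    ring
  have hu : Differentiable ℝ u := (hf.restrictScalars ℝ).norm_sq ℝ
  have hchain := lap_comp hφ hφ' hu (differentiable_fderiv_norm_sq_comp_apply hf 1 z)
    (differentiable_fderiv_norm_sq_comp_apply hf I z)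
  rw [fderiv_norm_sq_comp_one_sq_add_I_sq hf, lap_norm_sq_comp hf] at hchain
  refine hchain.trans ?_
  have hG := hpos z
  field_simp
  ring

theorem stmt2_general (h : ℝ) (hh : 0 < h) (N : ℕ) (μ : ℝ)
    (c : ℝ) (hc : c = Real.exp μ * h / (8 * (N + 1) ^ 2))
    (V : ℂ → ℝ)
    (hV : V = fun y => μ - 2 * Real.log (1 + c * ‖y ^ (N + 1) - 1‖ ^ 2)) :
    ∀ y : ℂ, lap V y + h * ‖y‖ ^ (2 * N) * Real.exp (V y) = 0 := by
  intro y
  subst hV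
  have hc₀ : 0 ≤ c := by rw [hc]; positivity
  have hG : 0 < 1 + c * ‖y ^ (N + 1) - 1‖ ^ 2 := by positivity
  have hderiv : deriv (fun w : ℂ => w ^ (N + 1) - 1) y = (N + 1) * y ^ N := by simp
  rw [lap_const_sub_two_mul_log_one_add_mul_norm_sq (by fun_prop) hc₀, hderiv,
    Real.exp_sub, mul_comm (2 : ℝ), Real.exp_mul, Real.exp_log hG, Real.rpow_two]
  have hN : ‖((N : ℂ) + 1)‖ = N + 1 := by norm_cast
  rw [norm_mul, norm_pow, hN, pow_mul, hc]
  field_simp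
  ring

theorem stmt2 (h : ℝ) (hh : 0 < h) (N : ℕ) (hN : 0 < N) (μ : ℝ)
    (c : ℝ) (hc : c = Real.exp μ * h / (8 * (N + 1) ^ 2))
    (V : ℂ → ℝ)
    (hV : V = fun y => μ - 2 * Real.log (1 + c * ‖y ^ (N + 1) - 1‖ ^ 2)) :
    ∀ y : ℂ, lap V y + h * ‖y‖ ^ (2 * N) * Real.exp (V y) = 0 :=
  stmt2_general h hh N μ c hc V hV
end

section
/- Let h > 0, N a positive integer, μ ∈ ℝ, and V(y) = μ − 2 log(1 + (e^μ h/(8(N+1)^2)) |y^{N+1} − 1|^2) for y ∈ ℂ. Then ∫_{ℝ²} |y|^{2N} e^{V(y)} dy = 8π(N+1)/h. -/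
/-!
Put `c = e^μ h / (8 (N+1)²)`, so that `e^V(y) = e^μ / (1 + c |y^{N+1} - 1|²)²`. In polar
coordinates the map `y ↦ y^{N+1}` is `(r, θ) ↦ (r^{N+1}, (N+1)θ)`; multiplication by `N+1` preserves
Lebesgue measure on the circle `ℝ / 2πℤ`, and the substitution `s = r^{N+1}` turns
`r^{2N} · r dr` into `s ds / (N+1)`. Hence the integral is `1/(N+1)` times
`∫ e^μ / (1 + c |w - 1|²)² dw = 2π e^μ ∫₀^∞ r / (1 + c r²)² dr = π e^μ / c = 8π (N+1)² / h`.
-/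

open MeasureTheory Set Real Function Filter
open scoped ENNReal

theorem Function.Periodic.setLIntegral_Ioc_comp_natCast_mul {W : ℝ → ℝ≥0∞} {T : ℝ}
    (hT : 0 < T) (hper : Periodic W T) (hW : Measurable W) {n : ℕ} (hn : n ≠ 0) (t : ℝ) :
    ∫⁻ x in Ioc t (t + T), W (n * x) = ∫⁻ x in Ioc t (t + T), W x := by
  have : Fact (0 < T) := ⟨hT⟩
  have hlift : Measurable hper.lift := measurable_from_quotient.mpr hW
  calc ∫⁻ x in Ioc t (t + T), W (n * x)
      = ∫⁻ x in Ioc t (t + T), hper.lift ((n : ℤ) • (x : AddCircle T)) := by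
        simp_rw [natCast_zsmul, ← AddCircle.coe_nsmul, Periodic.lift_coe, nsmul_eq_mul]
    _ = ∫⁻ y : AddCircle T, hper.lift ((n : ℤ) • y) :=
        AddCircle.lintegral_preimage T t (fun y => hper.lift ((n : ℤ) • y))
    _ = ∫⁻ y : AddCircle T, hper.lift y :=
        (Measure.measurePreserving_zsmul volume (by exact_mod_cast hn)).lintegral_comp hlift
    _ = ∫⁻ x in Ioc t (t + T), W x := (AddCircle.lintegral_preimage T t _).symm

theorem Complex.lintegral_eq_lintegral_polar {f : ℂ → ℝ≥0∞} (hf : Measurable f) :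
    ∫⁻ z, f z = ∫⁻ r in Ioi 0, ENNReal.ofReal r *
      ∫⁻ θ in Ioc (-π) π, f (r * Complex.exp (θ * Complex.I)) := by
  have hpolar : ∀ p : ℝ × ℝ, Complex.polarCoord.symm p = p.1 * Complex.exp (p.2 * Complex.I) := by
    intro p
    rw [Complex.polarCoord_symm_apply, Complex.exp_mul_I]
    push_cast
    ring
  have hmeas : Measurable fun p : ℝ × ℝ =>
      ENNReal.ofReal p.1 * f (p.1 * Complex.exp (p.2 * Complex.I)) :=
    measurable_fst.ennreal_ofReal.mul (hf.comp (by fun_prop))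
  rw [← Complex.lintegral_comp_polarCoord_symm, polarCoord_target, Measure.volume_eq_prod]
  simp_rw [hpolar, smul_eq_mul]
  rw [setLIntegral_prod _ hmeas.aemeasurable]
  refine setLIntegral_congr_fun measurableSet_Ioi fun r _ => ?_
  rw [lintegral_const_mul' _ _ ENNReal.ofReal_ne_top, setLIntegral_congr Ioo_ae_eq_Ioc]

theorem lintegral_Ioi_comp_pow (n : ℕ) (K : ℝ → ℝ≥0∞) :
    ∫⁻ r in Ioi 0, ENNReal.ofReal ((n + 1) * r ^ n) * K (r ^ (n + 1)) = ∫⁻ s in Ioi 0, K s := by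
  have himage : (· ^ (n + 1)) '' Ioi (0 : ℝ) = Ioi 0 := by
    refine Subset.antisymm (image_subset_iff.mpr fun r hr => pow_pos (mem_Ioi.mp hr) _)
      fun s hs => ?_
    exact ⟨s ^ ((n + 1 : ℕ) : ℝ)⁻¹, rpow_pos_of_pos hs _,
      rpow_inv_natCast_pow (le_of_lt hs) n.succ_ne_zero⟩
  have hderiv : ∀ r ∈ Ioi (0 : ℝ), HasDerivWithinAt (· ^ (n + 1)) ((n + 1 : ℕ) * r ^ n) (Ioi 0) r :=
    fun r _ => (hasDerivAt_pow (n + 1) r).hasDerivWithinAt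
  have hcov := lintegral_image_eq_lintegral_abs_deriv_mul measurableSet_Ioi hderiv
    ((pow_left_strictMonoOn₀ n.succ_ne_zero).injOn.mono fun r hr => le_of_lt hr) K
  rw [himage] at hcov
  rw [hcov]
  refine setLIntegral_congr_fun measurableSet_Ioi fun r hr => ?_
  rw [abs_of_pos (mul_pos (by positivity) (pow_pos hr n))]
  push_cast
  rfl

theorem Complex.lintegral_enorm_pow_mul_comp_pow (n : ℕ) {f : ℂ → ℝ≥0∞} (hf : Measurable f) :
    (n + 1) * ∫⁻ y, ‖y‖ₑ ^ (2 * n) * f (y ^ (n + 1)) = ∫⁻ w, f w := by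
  set K : ℝ → ℝ≥0∞ := fun s => ∫⁻ θ in Ioc (-π) π, f (s * Complex.exp (θ * Complex.I))
  have hangular : ∀ s : ℝ,
      ∫⁻ θ in Ioc (-π) π, f (s * Complex.exp (((n + 1 : ℕ) * θ : ℝ) * Complex.I)) = K s := by
    intro s
    have hper : Periodic (fun θ : ℝ => f (s * Complex.exp (θ * Complex.I))) (2 * π) :=
      fun θ => by simp [add_mul, Complex.exp_add]
    have := hper.setLIntegral_Ioc_comp_natCast_mul two_pi_pos (hf.comp (by fun_prop))
      n.succ_ne_zero (-π)
    rwa [neg_add_eq_sub, two_mul, add_sub_cancel_right] at this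
  have hpolar : ∀ r ∈ Ioi (0 : ℝ), ENNReal.ofReal r * ∫⁻ θ in Ioc (-π) π,
      ‖(r * Complex.exp (θ * Complex.I) : ℂ)‖ₑ ^ (2 * n) *
        f ((r * Complex.exp (θ * Complex.I)) ^ (n + 1))
      = ENNReal.ofReal (r ^ (2 * n + 1)) * K (r ^ (n + 1)) := by
    intro r hr
    have hnorm : ∀ θ : ℝ, ‖(r * Complex.exp (θ * Complex.I) : ℂ)‖ₑ = ENNReal.ofReal r := by
      intro θ
      rw [← ofReal_norm, norm_mul, Complex.norm_exp_ofReal_mul_I, mul_one,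
        Complex.norm_real, norm_of_nonneg (le_of_lt hr)]
    have hpow : ∀ θ : ℝ, (r * Complex.exp (θ * Complex.I) : ℂ) ^ (n + 1)
        = (r ^ (n + 1) : ℝ) * Complex.exp (((n + 1 : ℕ) * θ : ℝ) * Complex.I) := by
      intro θ
      rw [mul_pow, ← Complex.exp_nat_mul]
      push_cast
      ring_nf
    simp_rw [hnorm, hpow]
    rw [lintegral_const_mul' _ _ (by simp), hangular, ← mul_assoc,
      ← ENNReal.ofReal_pow (le_of_lt hr), ← ENNReal.ofReal_mul (le_of_lt hr), ← pow_succ']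
  rw [Complex.lintegral_eq_lintegral_polar (by fun_prop), Complex.lintegral_eq_lintegral_polar hf,
    setLIntegral_congr_fun measurableSet_Ioi hpolar,
    ← lintegral_Ioi_comp_pow n (fun s => ENNReal.ofReal s * K s),
    ← lintegral_const_mul' _ _ (by simp)]
  refine setLIntegral_congr_fun measurableSet_Ioi fun r hr => ?_
  have hr : (0 : ℝ) ≤ r := le_of_lt hr
  have hjac : ENNReal.ofReal ((n + 1) * r ^ n) = (n + 1) * ENNReal.ofReal (r ^ n) := by
    rw [ENNReal.ofReal_mul (by positivity)]
    norm_cast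
  rw [hjac, show 2 * n + 1 = n + (n + 1) by ring, pow_add,
    ENNReal.ofReal_mul (by positivity)]
  ring

theorem lintegral_Ioi_div_one_add_mul_sq_sq {c : ℝ} (hc : 0 < c) :
    ∫⁻ r in Ioi 0, ENNReal.ofReal (r / (1 + c * r ^ 2) ^ 2) = ENNReal.ofReal (1 / (2 * c)) := by
  set g : ℝ → ℝ := fun r => -(1 / (2 * c)) * (1 + c * r ^ 2)⁻¹
  have hderiv : ∀ r, HasDerivAt g (r / (1 + c * r ^ 2) ^ 2) r := by
    intro r
    have hpos : 0 < 1 + c * r ^ 2 := by positivity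
    refine ((((hasDerivAt_pow 2 r).const_mul c).const_add 1).inv hpos.ne' |>.const_mul
      (-(1 / (2 * c)))).congr_deriv ?_
    field_simp
    ring
  have hlim : Tendsto g atTop (nhds 0) := by
    have := (tendsto_atTop_add_const_left _ 1
      ((tendsto_pow_atTop two_ne_zero).const_mul_atTop hc)).inv_tendsto_atTop.const_mul
        (-(1 / (2 * c)))
    simpa [g] using this
  have hnonneg : ∀ r ∈ Ioi (0 : ℝ), 0 ≤ r / (1 + c * r ^ 2) ^ 2 :=
    fun r hr => div_nonneg (le_of_lt hr) (sq_nonneg _)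
  have hcont : ContinuousWithinAt g (Ici 0) 0 := (hderiv 0).continuousAt.continuousWithinAt
  rw [← ofReal_integral_eq_lintegral_ofReal
      (integrableOn_Ioi_deriv_of_nonneg hcont (fun r _ => hderiv r) hnonneg hlim)
      ((ae_restrict_iff' measurableSet_Ioi).mpr (.of_forall hnonneg)),
    integral_Ioi_of_hasDerivAt_of_nonneg hcont (fun r _ => hderiv r) hnonneg hlim]
  simp [g]

theorem Complex.lintegral_inv_one_add_mul_norm_sq_sq {c : ℝ} (hc : 0 < c) :
    ∫⁻ z : ℂ, ENNReal.ofReal (((1 + c * ‖z‖ ^ 2) ^ 2)⁻¹) = ENNReal.ofReal (π / c) := by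
  rw [Complex.lintegral_eq_lintegral_polar (by fun_prop)]
  calc ∫⁻ r in Ioi 0, ENNReal.ofReal r * ∫⁻ θ in Ioc (-π) π,
        ENNReal.ofReal (((1 + c * ‖(r * Complex.exp (θ * Complex.I) : ℂ)‖ ^ 2) ^ 2)⁻¹)
      = ∫⁻ r in Ioi 0, ENNReal.ofReal (2 * π) * ENNReal.ofReal (r / (1 + c * r ^ 2) ^ 2) := by
        refine setLIntegral_congr_fun measurableSet_Ioi fun r hr => ?_
        simp_rw [norm_mul, Complex.norm_exp_ofReal_mul_I, mul_one, Complex.norm_real,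
          norm_of_nonneg (le_of_lt hr), setLIntegral_const, Real.volume_Ioc]
        rw [sub_neg_eq_add, ← two_mul, div_eq_mul_inv, ENNReal.ofReal_mul (le_of_lt hr)]
        ring
    _ = ENNReal.ofReal (π / c) := by
        rw [lintegral_const_mul' _ _ ENNReal.ofReal_ne_top, lintegral_Ioi_div_one_add_mul_sq_sq hc,
          ← ENNReal.ofReal_mul two_pi_pos.le]
        congr 1
        field_simp

theorem stmt3_general (h : ℝ) (hh : 0 < h) (N : ℕ) (μ : ℝ)
    (V : ℂ → ℝ)
    (hV : V = fun y => μ - 2 * Real.log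
      (1 + (Real.exp μ * h / (8 * (N + 1) ^ 2)) * ‖y ^ (N + 1) - 1‖ ^ 2)) :
    (∫ y : ℂ, ‖y‖ ^ (2 * N) * Real.exp (V y))
      = 8 * Real.pi * (N + 1) / h := by
  subst hV
  set c : ℝ := Real.exp μ * h / (8 * (N + 1) ^ 2) with hc
  have hc0 : 0 < c := by positivity
  set f : ℂ → ℝ≥0∞ := fun w => ENNReal.ofReal (Real.exp μ * ((1 + c * ‖w - 1‖ ^ 2) ^ 2)⁻¹)
  have hintegrand : ∀ y : ℂ, ENNReal.ofReal (‖y‖ ^ (2 * N) *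
      Real.exp (μ - 2 * Real.log (1 + c * ‖y ^ (N + 1) - 1‖ ^ 2)))
      = ‖y‖ₑ ^ (2 * N) * f (y ^ (N + 1)) := by
    intro y
    rw [Real.exp_sub, two_mul (Real.log _), Real.exp_add, Real.exp_log (by positivity), ← sq,
      div_eq_mul_inv, ENNReal.ofReal_mul (by positivity), ENNReal.ofReal_pow (norm_nonneg _), ofReal_norm]
  have hf : ∫⁻ w, f w = ENNReal.ofReal (Real.exp μ * (π / c)) := by
    rw [← lintegral_add_right_eq_self _ 1]
    simp_rw [f, add_sub_cancel_right, ENNReal.ofReal_mul (Real.exp_pos μ).le]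
    rw [lintegral_const_mul' _ _ ENNReal.ofReal_ne_top,
      Complex.lintegral_inv_one_add_mul_norm_sq_sq hc0]
  have hlintegral : ∫⁻ y, ‖y‖ₑ ^ (2 * N) * f (y ^ (N + 1))
      = ENNReal.ofReal (8 * π * (N + 1) / h) := by
    rw [← ENNReal.mul_right_inj (a := (N : ℝ≥0∞) + 1) (by positivity) (by simp),
      Complex.lintegral_enorm_pow_mul_comp_pow N (by fun_prop), hf,
      show (N : ℝ≥0∞) + 1 = ENNReal.ofReal (N + 1) by norm_cast,
      ← ENNReal.ofReal_mul (by positivity)]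
    congr 1
    rw [hc]
    field_simp
  rw [integral_eq_lintegral_of_nonneg_ae (.of_forall fun y => by positivity) (by fun_prop),
    lintegral_congr hintegrand, hlintegral, ENNReal.toReal_ofReal (by positivity)]

theorem stmt3 (h : ℝ) (hh : 0 < h) (N : ℕ) (hN : 0 < N) (μ : ℝ)
    (V : ℂ → ℝ)
    (hV : V = fun y => μ - 2 * Real.log
      (1 + (Real.exp μ * h / (8 * (N + 1) ^ 2)) * ‖y ^ (N + 1) - 1‖ ^ 2)) :
    (∫ y : ℂ, ‖y‖ ^ (2 * N) * Real.exp (V y))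
      = 8 * Real.pi * (N + 1) / h :=
  stmt3_general h hh N μ V hV
end

section
/- Let N be a positive integer, λ > 0, μ ∈ ℝ, P ∈ ℂ, and set c = e^μ/λ. Then ∫_{ℝ²} (1 − c|z^{N+1} − P|²)|z|^{2N} / (1 + c|z^{N+1} − P|²)³ dz = 0. -/
/-!
The weight `|z|^{2N} dz` is carried by `z ↦ z^{N+1}` to `(N+1)⁻¹ dw`: in polar coordinates the
map is `r ↦ r^{N+1}`, which absorbs the weight as its Jacobian, times `θ ↦ (N+1)θ`, which
preserves Haar measure on the circle. The integral is therefore `(N+1)⁻¹ ∫ f(|w - P|²) dw`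
with `f(s) = (1 - cs)/(1 + cs)³`. After translating `P` away, this is `2π ∫₀^∞ r f(r²) dr`,
and `r f(r²) = 2r/(1 + cr²)³ - r/(1 + cr²)²`, whose two terms both integrate to `1/(2c)`.
-/

open MeasureTheory Set Real Filter Topology
open scoped ENNReal NNReal

theorem lintegral_comp_pow_Ioi (n : ℕ) (A : ℝ → ℝ≥0∞) :
    ∫⁻ r in Ioi 0, ENNReal.ofReal (r ^ n) * A (r ^ (n + 1))
      = (n + 1 : ℝ≥0∞)⁻¹ * ∫⁻ ρ in Ioi 0, A ρ := by
  have himage : (fun r : ℝ => r ^ (n + 1)) '' Ioi 0 = Ioi 0 := by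
    refine Subset.antisymm (image_subset_iff.2 fun r (hr : 0 < r) => pow_pos hr _) fun ρ hρ => ?_
    exact ⟨ρ ^ ((n + 1 : ℕ) : ℝ)⁻¹, rpow_pos_of_pos hρ _,
      rpow_inv_natCast_pow (le_of_lt hρ) n.succ_ne_zero⟩
  have hne : (n + 1 : ℝ≥0∞) ≠ 0 := by positivity
  have hsubst := lintegral_image_eq_lintegral_abs_deriv_mul measurableSet_Ioi
    (fun r _ => (hasDerivAt_pow (n + 1) r).hasDerivWithinAt)
    ((pow_left_strictMonoOn₀ n.succ_ne_zero).injOn.mono fun r hr => le_of_lt hr) A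
  rw [himage] at hsubst
  rw [hsubst, ← lintegral_const_mul' _ _ (ENNReal.inv_ne_top.2 hne)]
  refine setLIntegral_congr_fun measurableSet_Ioi fun r (hr : 0 < r) => ?_
  rw [abs_of_nonneg (by positivity), ENNReal.ofReal_mul (by positivity), ← mul_assoc,
    ← mul_assoc, ENNReal.ofReal_natCast, Nat.add_sub_cancel]
  push_cast
  rw [ENNReal.inv_mul_cancel hne (by simp), one_mul]

theorem AddCircle.lintegral_Ioc_comp_nsmul {T : ℝ} [Fact (0 < T)] (t : ℝ) {n : ℕ} (hn : n ≠ 0)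
    {f : AddCircle T → ℝ≥0∞} (hf : Measurable f) :
    ∫⁻ x in Ioc t (t + T), f (n • (x : AddCircle T)) = ∫⁻ x in Ioc t (t + T), f x := by
  rw [AddCircle.lintegral_preimage T t f, AddCircle.lintegral_preimage T t fun y => f (n • y)]
  have hpres := Measure.measurePreserving_zsmul (volume : Measure (AddCircle T))
    (n := (n : ℤ)) (by exact_mod_cast hn)
  simp only [natCast_zsmul] at hpres
  exact hpres.lintegral_comp hf

namespace Complex

theorem polarCoord_symm_eq_ofReal_mul_toCircle (ρ θ : ℝ) :
    Complex.polarCoord.symm (ρ, θ) = ρ * (AddCircle.toCircle (θ : AddCircle (2 * π)) : ℂ) := by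
  rw [AddCircle.toCircle_apply_mk, Complex.polarCoord_symm_apply, Circle.coe_exp,
    div_self two_pi_pos.ne', one_mul, Complex.exp_mul_I]
  push_cast
  ring

theorem lintegral_Ioo_comp_polarCoord_symm_pow (ρ : ℝ) {n : ℕ} (hn : n ≠ 0) {g : ℂ → ℝ≥0∞}
    (hg : Measurable g) :
    ∫⁻ θ in Ioo (-π) π, g (Complex.polarCoord.symm (ρ, θ) ^ n)
      = ∫⁻ θ in Ioo (-π) π, g (Complex.polarCoord.symm (ρ ^ n, θ)) := by
  have : Fact (0 < 2 * π) := ⟨two_pi_pos⟩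
  have hI : Ioo (-π) π =ᵐ[volume] Ioc (-π) (-π + 2 * π) := by
    rw [show -π + 2 * π = π by ring]
    exact Ioo_ae_eq_Ioc
  simp_rw [setLIntegral_congr hI, polarCoord_symm_eq_ofReal_mul_toCircle, mul_pow,
    ← Circle.coe_pow, ← AddCircle.toCircle_nsmul, Complex.ofReal_pow]
  exact AddCircle.lintegral_Ioc_comp_nsmul (-π) hn
    (f := fun y => g (ρ ^ n * AddCircle.toCircle y)) (by fun_prop)

theorem lintegral_eq_lintegral_Ioi_lintegral_Ioo {g : ℂ → ℝ≥0∞} (hg : Measurable g) :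
    ∫⁻ w, g w = ∫⁻ ρ in Ioi 0,
      ENNReal.ofReal ρ * ∫⁻ θ in Ioo (-π) π, g (Complex.polarCoord.symm (ρ, θ)) := by
  rw [← Complex.lintegral_comp_polarCoord_symm, polarCoord_target, Measure.volume_eq_prod,
    ← Measure.prod_restrict, lintegral_prod]
  · simp_rw [smul_eq_mul, lintegral_const_mul' _ _ ENNReal.ofReal_ne_top]
  · exact ((ENNReal.measurable_ofReal.comp measurable_fst).smul (hg.comp
      (Complex.measurableEquivRealProd.symm.measurable.comp continuous_polarCoord_symm.measurable)))
      |>.aemeasurable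

theorem lintegral_enorm_pow_mul_comp_pow_s8 (n : ℕ) {g : ℂ → ℝ≥0∞} (hg : Measurable g) :
    ∫⁻ z, ‖z‖ₑ ^ (2 * n) * g (z ^ (n + 1)) = (n + 1 : ℝ≥0∞)⁻¹ * ∫⁻ w, g w := by
  rw [lintegral_eq_lintegral_Ioi_lintegral_Ioo (by fun_prop),
    lintegral_eq_lintegral_Ioi_lintegral_Ioo hg, ← lintegral_comp_pow_Ioi]
  refine setLIntegral_congr_fun measurableSet_Ioi fun ρ (hρ : 0 < ρ) => ?_
  have hnorm (θ : ℝ) : ‖Complex.polarCoord.symm (ρ, θ)‖ₑ = ENNReal.ofReal ρ := by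
    rw [← ofReal_norm, Complex.norm_polarCoord_symm, abs_of_pos hρ]
  simp_rw [hnorm, lintegral_const_mul' _ _ (ENNReal.pow_ne_top ENNReal.ofReal_ne_top)]
  rw [lintegral_Ioo_comp_polarCoord_symm_pow ρ n.succ_ne_zero hg,
    ENNReal.ofReal_pow hρ.le, ENNReal.ofReal_pow hρ.le]
  ring

theorem map_pow_withDensity_enorm_pow (n : ℕ) :
    (volume.withDensity fun z : ℂ => ‖z‖ₑ ^ (2 * n)).map (· ^ (n + 1))
      = (n + 1 : ℝ≥0∞)⁻¹ • volume := by
  refine Measure.ext_of_lintegral _ fun g hg => ?_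
  rw [lintegral_map hg (by fun_prop), lintegral_withDensity_eq_lintegral_mul _ (by fun_prop)
    (g := fun z => g (z ^ (n + 1))) (by fun_prop), lintegral_smul_measure]
  exact lintegral_enorm_pow_mul_comp_pow_s8 n hg

theorem integral_norm_pow_smul_comp_pow {E : Type*} [NormedAddCommGroup E] [NormedSpace ℝ E]
    (n : ℕ) {g : ℂ → E} (hg : AEStronglyMeasurable g) :
    ∫ z, ‖z‖ ^ (2 * n) • g (z ^ (n + 1)) = (n + 1 : ℝ)⁻¹ • ∫ w, g w := by
  have hdens := integral_withDensity_eq_integral_smul (μ := (volume : Measure ℂ))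
    (f := fun z => ‖z‖₊ ^ (2 * n)) (by fun_prop) fun z => g (z ^ (n + 1))
  simp only [ENNReal.coe_pow, ← enorm_eq_nnnorm, NNReal.smul_def, NNReal.coe_pow,
    coe_nnnorm] at hdens
  rw [← hdens, ← integral_map (by fun_prop), map_pow_withDensity_enorm_pow,
    integral_smul_measure]
  · rw [ENNReal.toReal_inv]
    norm_cast
  · rw [map_pow_withDensity_enorm_pow]
    exact hg.smul_measure _

end Complex

theorem hasDerivAt_neg_inv_one_add_mul_sq_pow {c : ℝ} (hc : 0 < c) (k : ℕ) (r : ℝ) :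
    HasDerivAt (fun r : ℝ => -((1 + c * r ^ 2) ^ (k + 1))⁻¹ / (2 * c * (k + 1)))
      (r / (1 + c * r ^ 2) ^ (k + 2)) r := by
  have hpos : 0 < 1 + c * r ^ 2 := by positivity
  refine ((((hasDerivAt_pow 2 r).const_mul c).const_add 1).fun_pow (k + 1)
    |>.fun_inv (pow_pos hpos _).ne' |>.fun_neg.div_const (2 * c * (k + 1))).congr_deriv ?_
  field_simp
  push_cast
  ring

theorem tendsto_neg_inv_one_add_mul_sq_pow {c : ℝ} (hc : 0 < c) (k : ℕ) :
    Tendsto (fun r : ℝ => -((1 + c * r ^ 2) ^ (k + 1))⁻¹ / (2 * c * (k + 1))) atTop (𝓝 0) := by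
  have h : Tendsto (fun r : ℝ => (1 + c * r ^ 2) ^ (k + 1)) atTop atTop :=
    (tendsto_pow_atTop k.succ_ne_zero).comp (tendsto_atTop_add_const_left _ 1
      ((tendsto_pow_atTop two_ne_zero).const_mul_atTop hc))
  simpa using (h.inv_tendsto_atTop.neg).div_const (2 * c * (k + 1))

theorem integrableOn_Ioi_div_one_add_mul_sq_pow {c : ℝ} (hc : 0 < c) (k : ℕ) :
    IntegrableOn (fun r : ℝ => r / (1 + c * r ^ 2) ^ (k + 2)) (Ioi 0) :=
  integrableOn_Ioi_deriv_of_nonneg' (fun r _ => hasDerivAt_neg_inv_one_add_mul_sq_pow hc k r)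
    (fun r (hr : 0 < r) => by positivity) (tendsto_neg_inv_one_add_mul_sq_pow hc k)

theorem integral_Ioi_div_one_add_mul_sq_pow {c : ℝ} (hc : 0 < c) (k : ℕ) :
    ∫ r in Ioi 0, r / (1 + c * r ^ 2) ^ (k + 2) = (2 * c * (k + 1))⁻¹ := by
  rw [integral_Ioi_of_hasDerivAt_of_nonneg'
    (fun r _ => hasDerivAt_neg_inv_one_add_mul_sq_pow hc k r)
    (fun r (hr : 0 < r) => by positivity) (tendsto_neg_inv_one_add_mul_sq_pow hc k)]
  field_simp
  ring

theorem Complex.integral_one_sub_mul_norm_sq_div_eq_zero {c : ℝ} (hc : 0 < c) :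
    ∫ w : ℂ, (1 - c * ‖w‖ ^ 2) / (1 + c * ‖w‖ ^ 2) ^ 3 = 0 := by
  -- two terms of constant sign, so that each is integrable by the monotone case of the FTC
  have hsplit (r : ℝ) : r ^ (2 - 1) • ((1 - c * r ^ 2) / (1 + c * r ^ 2) ^ 3)
      = 2 * (r / (1 + c * r ^ 2) ^ (1 + 2)) - r / (1 + c * r ^ 2) ^ (0 + 2) := by
    have : 0 < 1 + c * r ^ 2 := by positivity
    simp only [smul_eq_mul]
    field_simp
    ring
  have hradial : ∫ r in Ioi 0, r ^ (2 - 1) • ((1 - c * r ^ 2) / (1 + c * r ^ 2) ^ 3) = 0 := by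
    simp_rw [hsplit]
    rw [integral_sub ((integrableOn_Ioi_div_one_add_mul_sq_pow hc 1).const_mul 2)
      (integrableOn_Ioi_div_one_add_mul_sq_pow hc 0), integral_const_mul,
      integral_Ioi_div_one_add_mul_sq_pow hc, integral_Ioi_div_one_add_mul_sq_pow hc]
    field_simp
    ring
  rw [integral_fun_norm_addHaar volume fun r : ℝ => (1 - c * r ^ 2) / (1 + c * r ^ 2) ^ 3,
    finrank_real_complex, hradial, smul_zero, smul_zero]

theorem stmt8_general (N : ℕ) (lam : ℝ) (hlam : 0 < lam) (μ : ℝ) (P : ℂ)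
    (c : ℝ) (hc : c = Real.exp μ / lam) :
    (∫ z : ℂ,
        (1 - c * ‖z ^ (N + 1) - P‖ ^ 2) * ‖z‖ ^ (2 * N)
          / (1 + c * ‖z ^ (N + 1) - P‖ ^ 2) ^ 3) = 0 := by
  have hc0 : 0 < c := hc ▸ by positivity
  set f : ℂ → ℝ := fun w => (1 - c * ‖w - P‖ ^ 2) / (1 + c * ‖w - P‖ ^ 2) ^ 3
  calc
    _ = ∫ z : ℂ, ‖z‖ ^ (2 * N) • f (z ^ (N + 1)) := by
      congr 1 with z
      simp only [f, smul_eq_mul]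
      ring
    _ = (N + 1 : ℝ)⁻¹ • ∫ w, f w :=
      Complex.integral_norm_pow_smul_comp_pow N (by fun_prop : Measurable f).aestronglyMeasurable
    _ = 0 := by
      rw [integral_sub_right_eq_self (fun w => (1 - c * ‖w‖ ^ 2) / (1 + c * ‖w‖ ^ 2) ^ 3) P,
        Complex.integral_one_sub_mul_norm_sq_div_eq_zero hc0, smul_zero]

theorem stmt8 (N : ℕ) (hN : 0 < N) (lam : ℝ) (hlam : 0 < lam) (μ : ℝ) (P : ℂ)
    (c : ℝ) (hc : c = Real.exp μ / lam) :
    (∫ z : ℂ,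
        (1 - c * ‖z ^ (N + 1) - P‖ ^ 2) * ‖z‖ ^ (2 * N)
          / (1 + c * ‖z ^ (N + 1) - P‖ ^ 2) ^ 3) = 0 :=
  stmt8_general N lam hlam μ P c hc
end

section
/- Let N be a positive integer, c > 0, and P ∈ ℂ. Then ∫_{ℝ²} c(z^{N+1} − P)|z|^{2N} / (1 + c|z^{N+1} − P|²)³ dz = 0 (as a complex-valued integral), and the same holds with z^{N+1} − P replaced by its complex conjugate. -/
/-!
Write `g w = c w / (1 + c |w|²)³`. The first integrand is `|z|^{2N} g(z^{N+1} - P)` and the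
second one is its complex conjugate. The substitution `w = z^{N+1}` is `(N+1)`-to-one with Jacobian
`(N+1)² |z|^{2N}`, so for every integrable `G`, `∫ |z|^{2N} G(z^{N+1}) dz = (N+1)⁻¹ ∫ G`. For
`G = g(· - P)` this is `(N+1)⁻¹ ∫ g = 0`, because `g` is odd.

The substitution is carried out in polar coordinates, where it reads
`(r, θ) ↦ (r^{N+1}, (N+1) θ)`. It maps the polar chart `(0, ∞) × (-π, π)` injectively onto
`N + 1` full turns. Shifting the angle of a turn is a rotation of the plane, which preserves
Lebesgue measure, so each turn contributes `∫ G`.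
-/

open MeasureTheory Set
open scoped Real

theorem image_pow_Ioi_zero {m : ℕ} (hm : m ≠ 0) : (· ^ m) '' Ioi (0 : ℝ) = Ioi 0 := by
  ext y
  refine ⟨fun ⟨x, hx, hxy⟩ => hxy ▸ pow_pos (mem_Ioi.mp hx) m, fun hy => ⟨y ^ (m⁻¹ : ℝ),
    Real.rpow_pos_of_pos hy _, Real.rpow_inv_natCast_pow (le_of_lt hy) hm⟩⟩

theorem prod_Ioo_ae_eq_prod_Ioc (s : Set ℝ) (a b : ℝ) :
    (s ×ˢ Ioo a b : Set (ℝ × ℝ)) =ᵐ[volume] s ×ˢ Ioc a b :=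
  Measure.set_prod_ae_eq (ae_eq_refl _) Ioo_ae_eq_Ioc

theorem Ioc_add_mul_succ {d : ℝ} (hd : 0 ≤ d) (a : ℝ) (k : ℕ) :
    Ioc a (a + d * (k + 1 : ℕ)) = Ioc a (a + d * k) ∪ Ioc (a + d * k) (a + d * k + d) := by
  rw [Ioc_union_Ioc_eq_Ioc (le_add_of_nonneg_right (by positivity)) (le_add_of_nonneg_right hd)]
  push_cast
  ring_nf

theorem preimage_add_snd_Ioi_prod_Ioc (b : ℝ) :
    (· + ((0 : ℝ), b + π)) ⁻¹' (Ioi (0 : ℝ) ×ˢ Ioc b (b + 2 * π)) = Ioi 0 ×ˢ Ioc (-π) π := by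
  ext ⟨r, θ⟩
  simp only [mem_preimage, Prod.mk_add_mk, add_zero, mem_prod, mem_Ioi, mem_Ioc]
  constructor <;> rintro ⟨hr, h₁, h₂⟩ <;> exact ⟨hr, by linarith, by linarith⟩

namespace Complex

theorem polarCoord_symm_pow (p : ℝ × ℝ) (m : ℕ) :
    Complex.polarCoord.symm p ^ m = Complex.polarCoord.symm (p.1 ^ m, m * p.2) := by
  simp only [Complex.polarCoord_symm_apply, mul_pow, ofReal_cos, ofReal_sin,
    cos_add_sin_mul_I_pow]
  push_cast
  rfl

theorem polarCoord_symm_add_snd (p : ℝ × ℝ) (t : ℝ) :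
    Complex.polarCoord.symm (p + (0, t)) =
      rotation (Circle.exp t) (Complex.polarCoord.symm p) := by
  simp only [Complex.polarCoord_symm_apply, rotation_apply, Circle.coe_exp, Prod.fst_add,
    Prod.snd_add, add_zero, Real.cos_add, Real.sin_add, exp_mul_I]
  push_cast
  linear_combination (-(p.1 : ℂ) * sin p.2 * sin t) * I_sq

section PolarIntegrals

variable {E : Type*} [NormedAddCommGroup E] [NormedSpace ℝ E] {G : ℂ → E}

theorem integrableOn_polarCoord_symm (hG : Integrable G) :
    IntegrableOn (fun p : ℝ × ℝ => p.1 • G (Complex.polarCoord.symm p)) polarCoord.target := by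
  have hG' : Integrable (G ∘ measurableEquivRealProd.symm) :=
    (volume_preserving_equiv_real_prod.symm.integrable_comp_emb
      measurableEquivRealProd.symm.measurableEmbedding).mpr hG
  have h := (integrableOn_image_iff_integrableOn_abs_det_fderiv_smul volume
    polarCoord.open_target.measurableSet
    (fun p _ => (hasFDerivAt_polarCoord_symm p).hasFDerivWithinAt) polarCoord.symm.injOn
    (G ∘ measurableEquivRealProd.symm)).mp
    (by rw [polarCoord.symm_image_target_eq_source]; exact hG'.integrableOn)
  refine h.congr_fun (fun p hp => ?_) polarCoord.open_target.measurableSet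
  simp only [det_fderivPolarCoordSymm, abs_of_pos (show 0 < p.1 from hp.1)]
  rfl

theorem integrableOn_polarCoord_symm_Ioc_add_two_pi (hG : Integrable G) (b : ℝ) :
    IntegrableOn (fun p : ℝ × ℝ => p.1 • G (Complex.polarCoord.symm p))
      (Ioi 0 ×ˢ Ioc b (b + 2 * π)) := by
  set ρ := rotation (Circle.exp (b + π))
  have hGρ : Integrable (G ∘ ρ) :=
    (ρ.measurePreserving.integrable_comp_emb ρ.toHomeomorph.measurableEmbedding).mpr hG
  rw [← (measurePreserving_add_right volume ((0 : ℝ), b + π)).integrableOn_comp_preimage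
    (measurableEmbedding_addRight _), preimage_add_snd_Ioi_prod_Ioc, Function.comp_def]
  simp_rw [Prod.fst_add, add_zero, polarCoord_symm_add_snd]
  exact (integrableOn_polarCoord_symm hGρ).congr_set_ae (prod_Ioo_ae_eq_prod_Ioc _ _ _).symm

theorem setIntegral_polarCoord_symm_Ioc_add_two_pi (b : ℝ) :
    ∫ p in Ioi 0 ×ˢ Ioc b (b + 2 * π), p.1 • G (Complex.polarCoord.symm p) = ∫ z, G z := by
  set ρ := rotation (Circle.exp (b + π))
  rw [← (measurePreserving_add_right volume ((0 : ℝ), b + π)).setIntegral_preimage_emb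
    (measurableEmbedding_addRight _), preimage_add_snd_Ioi_prod_Ioc]
  simp_rw [Prod.fst_add, add_zero, polarCoord_symm_add_snd]
  rw [← setIntegral_congr_set (prod_Ioo_ae_eq_prod_Ioc _ _ _), ← polarCoord_target,
    Complex.integral_comp_polarCoord_symm (fun z => G (ρ z)),
    ρ.measurePreserving.integral_comp ρ.toHomeomorph.measurableEmbedding]

theorem integrableOn_polarCoord_symm_Ioc_add_two_pi_mul (hG : Integrable G) (a : ℝ) (k : ℕ) :
    IntegrableOn (fun p : ℝ × ℝ => p.1 • G (Complex.polarCoord.symm p))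
      (Ioi 0 ×ˢ Ioc a (a + 2 * π * k)) := by
  induction k with
  | zero => simp
  | succ k ih =>
    rw [Ioc_add_mul_succ (by positivity), prod_union]
    exact ih.union (integrableOn_polarCoord_symm_Ioc_add_two_pi hG _)

theorem setIntegral_polarCoord_symm_Ioc_add_two_pi_mul (hG : Integrable G) (a : ℝ) (k : ℕ) :
    ∫ p in Ioi 0 ×ˢ Ioc a (a + 2 * π * k), p.1 • G (Complex.polarCoord.symm p) =
      (k : ℝ) • ∫ z, G z := by
  induction k with
  | zero => simp
  | succ k ih =>
    have hdisj : Disjoint (Ioi (0 : ℝ) ×ˢ Ioc a (a + 2 * π * k))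
        (Ioi 0 ×ˢ Ioc (a + 2 * π * k) (a + 2 * π * k + 2 * π)) :=
      disjoint_prod.mpr (Or.inr (Ioc_disjoint_Ioc_of_le le_rfl))
    rw [Ioc_add_mul_succ (by positivity), prod_union, setIntegral_union hdisj
      (measurableSet_Ioi.prod measurableSet_Ioc)
      (integrableOn_polarCoord_symm_Ioc_add_two_pi_mul hG a k)
      (integrableOn_polarCoord_symm_Ioc_add_two_pi hG _), ih,
      setIntegral_polarCoord_symm_Ioc_add_two_pi]
    push_cast
    rw [add_smul, one_smul]

theorem integral_norm_pow_smul_comp_pow_eq_setIntegral (n : ℕ) :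
    ∫ z : ℂ, ‖z‖ ^ (2 * n) • G (z ^ (n + 1)) =
      ((n + 1 : ℝ) ^ 2)⁻¹ • ∫ p in Ioi 0 ×ˢ Ioo (-((n + 1) * π)) ((n + 1) * π),
        p.1 • G (Complex.polarCoord.symm p) := by
  set Φ : ℝ × ℝ → ℝ × ℝ := Prod.map (· ^ (n + 1)) ((n + 1 : ℝ) * ·)
  set Φ' : ℝ × ℝ → ℝ × ℝ →L[ℝ] ℝ × ℝ := fun p =>
    (ContinuousLinearMap.toSpanSingleton ℝ ((n + 1 : ℝ) * p.1 ^ n)).prodMap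
      (ContinuousLinearMap.toSpanSingleton ℝ (n + 1 : ℝ))
  have hΦ' : ∀ p ∈ polarCoord.target, HasFDerivWithinAt Φ (Φ' p) polarCoord.target p := by
    intro p _
    refine (HasFDerivAt.prodMap p ?_ ?_).hasFDerivWithinAt
    · simpa using (hasDerivAt_pow (n + 1) p.1).hasFDerivAt
    · simpa using ((hasDerivAt_id p.2).const_mul (n + 1 : ℝ)).hasFDerivAt
  have hdet : ∀ p, (Φ' p).det = (n + 1 : ℝ) ^ 2 * p.1 ^ n := by
    intro p
    simp only [Φ', ContinuousLinearMap.det, ContinuousLinearMap.coe_prodMap,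
      ContinuousLinearMap.toLinearMap_toSpanSingleton, LinearMap.det_prodMap, LinearMap.det_ring,
      LinearMap.toSpanSingleton_apply, smul_eq_mul, one_mul]
    ring
  have hinj : InjOn Φ polarCoord.target :=
    ((pow_left_strictMonoOn₀ n.succ_ne_zero).injOn.mono Ioi_subset_Ici_self).prodMap
      (mul_right_injective₀ (by positivity)).injOn
  have himage : Φ '' polarCoord.target = Ioi 0 ×ˢ Ioo (-((n + 1) * π)) ((n + 1) * π) := by
    rw [polarCoord_target, prodMap_image_prod, image_pow_Ioi_zero n.succ_ne_zero,
      image_mul_left_Ioo (by positivity), mul_neg]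
  rw [← himage, integral_image_eq_integral_abs_det_fderiv_smul volume
    polarCoord.open_target.measurableSet hΦ' hinj, ← integral_smul,
    ← Complex.integral_comp_polarCoord_symm]
  refine setIntegral_congr_fun polarCoord.open_target.measurableSet fun p hp => ?_
  have hr : 0 < p.1 := hp.1
  simp only [hdet, norm_polarCoord_symm, abs_of_pos hr, polarCoord_symm_pow, Φ, Prod.map_fst,
    smul_smul, abs_of_pos (show 0 < (n + 1 : ℝ) ^ 2 * p.1 ^ n by positivity)]
  push_cast
  congr 1
  field_simp
  ring

theorem integral_norm_pow_smul_comp_pow_s9 (hG : Integrable G) (n : ℕ) :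
    ∫ z : ℂ, ‖z‖ ^ (2 * n) • G (z ^ (n + 1)) = (n + 1 : ℝ)⁻¹ • ∫ z, G z := by
  have hturns := setIntegral_polarCoord_symm_Ioc_add_two_pi_mul hG (-((n + 1) * π)) (n + 1)
  rw [show -((n + 1) * π) + 2 * π * ((n + 1 : ℕ) : ℝ) = (n + 1) * π by push_cast; ring]
    at hturns
  rw [integral_norm_pow_smul_comp_pow_eq_setIntegral,
    setIntegral_congr_set (prod_Ioo_ae_eq_prod_Ioc _ _ _), hturns, smul_smul]
  congr 1
  push_cast
  field_simp

end PolarIntegrals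

end Complex

noncomputable def oddProfile (c : ℝ) (w : ℂ) : ℂ := c * w / ((1 + c * ‖w‖ ^ 2 : ℝ) : ℂ) ^ 3

theorem oddProfile_neg (c : ℝ) (w : ℂ) : oddProfile c (-w) = -oddProfile c w := by
  simp only [oddProfile, norm_neg, mul_neg, neg_div]

theorem integral_oddProfile (c : ℝ) : ∫ w, oddProfile c w = 0 := by
  have h := integral_neg_eq_self (oddProfile c) volume
  simp only [oddProfile_neg, integral_neg] at h
  exact neg_eq_self.mp h

theorem norm_oddProfile_le {c : ℝ} (hc : 0 ≤ c) (w : ℂ) :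
    ‖oddProfile c w‖ ≤ √c * ((1 + c * ‖w‖ ^ 2) ^ 2)⁻¹ := by
  have hD : 0 < 1 + c * ‖w‖ ^ 2 := by positivity
  have hsq : √c ^ 2 = c := Real.sq_sqrt hc
  have hx : √c * ‖w‖ ≤ 1 + (√c * ‖w‖) ^ 2 := by nlinarith [sq_nonneg (√c * ‖w‖ - 1)]
  rw [oddProfile, norm_div, norm_mul, norm_pow, Complex.norm_real, Complex.norm_real,
    Real.norm_of_nonneg hc, Real.norm_of_nonneg hD.le, div_le_iff₀ (by positivity)]
  calc c * ‖w‖ = √c * (√c * ‖w‖) := by rw [← mul_assoc, ← sq, hsq]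
    _ ≤ √c * (1 + (√c * ‖w‖) ^ 2) := mul_le_mul_of_nonneg_left hx (Real.sqrt_nonneg c)
    _ = √c * ((1 + c * ‖w‖ ^ 2) ^ 2)⁻¹ * (1 + c * ‖w‖ ^ 2) ^ 3 := by
      field_simp
      rw [hsq]
      ring

theorem integrable_oddProfile {c : ℝ} (hc : 0 < c) : Integrable (oddProfile c) := by
  have hmajorant : Integrable fun w : ℂ => √c * ((1 + c * ‖w‖ ^ 2) ^ 2)⁻¹ := by
    refine (((integrable_rpow_neg_one_add_norm_sq (E := ℂ) (r := 4)
      (by rw [Complex.finrank_real_complex]; norm_num)).comp_smul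
      (Real.sqrt_pos.mpr hc).ne').const_mul √c).congr (Filter.Eventually.of_forall fun w => ?_)
    simp only [norm_smul, mul_pow, Real.norm_of_nonneg (Real.sqrt_nonneg c), Real.sq_sqrt hc.le]
    rw [show -(4 : ℝ) / 2 = -(2 : ℕ) by norm_num, Real.rpow_neg (by positivity), Real.rpow_natCast]
  refine hmajorant.mono' ?_ (Filter.Eventually.of_forall (norm_oddProfile_le hc.le))
  exact Measurable.aestronglyMeasurable (by unfold oddProfile; fun_prop)

theorem stmt9_general (N : ℕ) (c : ℝ) (hc : 0 < c) (P : ℂ) :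
    (∫ z : ℂ,
        ((c : ℂ) * (z ^ (N + 1) - P) * ((‖z‖ ^ (2 * N) : ℝ) : ℂ)
          / (((1 + c * ‖z ^ (N + 1) - P‖ ^ 2 : ℝ) : ℂ)) ^ 3)) = 0 ∧
    (∫ z : ℂ,
        ((c : ℂ) * (starRingEnd ℂ (z ^ (N + 1) - P)) * ((‖z‖ ^ (2 * N) : ℝ) : ℂ)
          / (((1 + c * ‖z ^ (N + 1) - P‖ ^ 2 : ℝ) : ℂ)) ^ 3)) = 0 := by
  have hfirst : (∫ z : ℂ,
      ((c : ℂ) * (z ^ (N + 1) - P) * ((‖z‖ ^ (2 * N) : ℝ) : ℂ)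
        / (((1 + c * ‖z ^ (N + 1) - P‖ ^ 2 : ℝ) : ℂ)) ^ 3)) = 0 := by
    calc _ = ∫ z : ℂ, ‖z‖ ^ (2 * N) • oddProfile c (z ^ (N + 1) - P) := by
          congr with z
          rw [oddProfile, Complex.real_smul]
          ring
      _ = (N + 1 : ℝ)⁻¹ • ∫ w, oddProfile c (w - P) :=
          Complex.integral_norm_pow_smul_comp_pow_s9 ((integrable_oddProfile hc).comp_sub_right P) N
      _ = 0 := by rw [integral_sub_right_eq_self, integral_oddProfile, smul_zero]
  refine ⟨hfirst, ?_⟩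
  simpa [← integral_conj] using congrArg (starRingEnd ℂ) hfirst

theorem stmt9 (N : ℕ) (hN : 0 < N) (c : ℝ) (hc : 0 < c) (P : ℂ) :
    (∫ z : ℂ,
        ((c : ℂ) * (z ^ (N + 1) - P) * ((‖z‖ ^ (2 * N) : ℝ) : ℂ)
          / (((1 + c * ‖z ^ (N + 1) - P‖ ^ 2 : ℝ) : ℂ)) ^ 3)) = 0 ∧
    (∫ z : ℂ,
        ((c : ℂ) * (starRingEnd ℂ (z ^ (N + 1) - P)) * ((‖z‖ ^ (2 * N) : ℝ) : ℂ)
          / (((1 + c * ‖z ^ (N + 1) - P‖ ^ 2 : ℝ) : ℂ)) ^ 3)) = 0 :=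
  stmt9_general N c hc P
end

section
/- Let N be a positive integer, μ ∈ ℝ, c > 0, and V(y) = μ − 2 log(1 + c|y^{N+1} − 1|²). Then there is a constant C (depending on N, μ, c) such that for all |y| ≥ 2: |V(y) − (−μ − 4(N+1) log|y| + log(e^{2μ}/c²))| ≤ C |y|^{-(N+1)}. -/
/-!
Writing `w = y ^ (N + 1)`, the main term equals `μ - 2 log (c ‖w‖²)`, so the error is
`-2 log t` with `t = (1 + c ‖w - 1‖²) / (c ‖w‖²)`. Since `‖w - 1‖` and `‖w‖` differ by at most `1`,
`t - 1 = O(1 / ‖w‖)` and `t ≥ 1/4` once `‖w‖ ≥ 2`, where `log` is Lipschitz.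
-/

open Real

lemma Real.abs_log_le_abs_sub_one_div {a t : ℝ} (ha : 0 < a) (ha₁ : a ≤ 1) (hat : a ≤ t) :
    |log t| ≤ |t - 1| / a := by
  have ht : 0 < t := ha.trans_le hat
  rcases le_total 1 t with h | h
  · rw [abs_of_nonneg (log_nonneg h), abs_of_nonneg (sub_nonneg.mpr h), le_div_iff₀ ha]
    nlinarith [log_le_sub_one_of_pos ht]
  · rw [abs_of_nonpos (log_nonpos ht.le h), abs_of_nonpos (sub_nonpos.mpr h),
      le_div_iff₀ ha]
    have key : (t - 1) / t ≤ log t := by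
      simpa [sub_div, div_self ht.ne'] using one_sub_inv_le_log_of_pos ht
    rw [div_le_iff₀ ht] at key
    nlinarith [log_nonpos ht.le h]

lemma abs_norm_sub_sq_sub_norm_sq_le {E : Type*} [SeminormedAddCommGroup E] (a b : E) :
    |‖a - b‖ ^ 2 - ‖a‖ ^ 2| ≤ ‖b‖ * (2 * ‖a‖ + ‖b‖) := by
  have hdiff : |‖a - b‖ - ‖a‖| ≤ ‖b‖ := by
    simpa [abs_sub_comm] using abs_norm_sub_norm_le a (a - b)
  have hsum : ‖a - b‖ + ‖a‖ ≤ 2 * ‖a‖ + ‖b‖ := by linarith [norm_sub_le a b]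
  calc |‖a - b‖ ^ 2 - ‖a‖ ^ 2| = |‖a - b‖ - ‖a‖| * (‖a - b‖ + ‖a‖) := by
        rw [sq_sub_sq, abs_mul, abs_of_nonneg (by positivity : 0 ≤ ‖a - b‖ + ‖a‖), mul_comm]
    _ ≤ ‖b‖ * (2 * ‖a‖ + ‖b‖) := by gcongr

section Ratio

variable {c : ℝ} {w : ℂ}

lemma one_div_four_le_ratio (hc : 0 < c) (hw : 2 ≤ ‖w‖) :
    1 / 4 ≤ (1 + c * ‖w - 1‖ ^ 2) / (c * ‖w‖ ^ 2) := by
  have hhalf : ‖w‖ / 2 ≤ ‖w - 1‖ := by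
    linarith [norm_sub_norm_le w 1, norm_one (α := ℂ)]
  rw [le_div_iff₀ (by positivity)]
  nlinarith [mul_le_mul hhalf hhalf (by positivity) (norm_nonneg _)]

lemma abs_ratio_sub_one_le (hc : 0 < c) (hw : 1 ≤ ‖w‖) :
    |(1 + c * ‖w - 1‖ ^ 2) / (c * ‖w‖ ^ 2) - 1| ≤ (1 / c + 3) / ‖w‖ := by
  set R := ‖w‖
  have hR : 0 < R := by linarith
  have hsq : |‖w - 1‖ ^ 2 - R ^ 2| ≤ 2 * R + 1 := by
    simpa using abs_norm_sub_sq_sub_norm_sq_le w 1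
  have hnum : |1 + c * (‖w - 1‖ ^ 2 - R ^ 2)| ≤ 1 + c * (2 * R + 1) := by
    calc |1 + c * (‖w - 1‖ ^ 2 - R ^ 2)| ≤ |1| + |c * (‖w - 1‖ ^ 2 - R ^ 2)| := abs_add_le _ _
      _ = 1 + c * |‖w - 1‖ ^ 2 - R ^ 2| := by rw [abs_one, abs_mul, abs_of_pos hc]
      _ ≤ 1 + c * (2 * R + 1) := by gcongr
  calc |(1 + c * ‖w - 1‖ ^ 2) / (c * R ^ 2) - 1|
        = |1 + c * (‖w - 1‖ ^ 2 - R ^ 2)| / (c * R ^ 2) := by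
          rw [div_sub_one (by positivity), abs_div, abs_of_pos (by positivity : 0 < c * R ^ 2)]
          ring_nf
    _ ≤ (1 + c * (2 * R + 1)) / (c * R ^ 2) := by gcongr
    _ ≤ (1 / c + 3) / R := by
          rw [div_le_div_iff₀ (by positivity) hR]
          field_simp
          nlinarith [mul_le_mul_of_nonneg_left hw hc.le]

lemma abs_log_ratio_le (hc : 0 < c) (hw : 2 ≤ ‖w‖) :
    |log (1 + c * ‖w - 1‖ ^ 2) - log (c * ‖w‖ ^ 2)| ≤ 4 * (1 / c + 3) / ‖w‖ := by
  rw [← log_div (by positivity) (by positivity)]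
  calc _ ≤ |(1 + c * ‖w - 1‖ ^ 2) / (c * ‖w‖ ^ 2) - 1| / (1 / 4) :=
        abs_log_le_abs_sub_one_div (by norm_num) (by norm_num) (one_div_four_le_ratio hc hw)
    _ ≤ (1 / c + 3) / ‖w‖ / (1 / 4) := by gcongr; exact abs_ratio_sub_one_le hc (by linarith)
    _ = 4 * (1 / c + 3) / ‖w‖ := by ring

end Ratio

theorem stmt15_general (N : ℕ) (μ : ℝ) (c : ℝ) (hc : 0 < c)
    (V : ℂ → ℝ)
    (hV : V = fun y => μ - 2 * Real.log (1 + c * ‖y ^ (N + 1) - 1‖ ^ 2)) :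
    ∃ C : ℝ, ∀ y : ℂ, 2 ≤ ‖y‖ →
      |V y - (-μ - 4 * (N + 1) * Real.log (‖y‖)
          + Real.log (Real.exp (2 * μ) / c ^ 2))|
        ≤ C / ‖y‖ ^ (N + 1) := by
  refine ⟨8 * (1 / c + 3), fun y hy => ?_⟩
  have hnorm : ‖y ^ (N + 1)‖ = ‖y‖ ^ (N + 1) := norm_pow y (N + 1)
  have hmain : -μ - 4 * (N + 1) * log ‖y‖ + log (exp (2 * μ) / c ^ 2)
      = μ - 2 * log (c * ‖y ^ (N + 1)‖ ^ 2) := by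
    rw [hnorm, log_div (exp_ne_zero _) (by positivity), log_exp, log_mul hc.ne' (by positivity),
      ← pow_mul, log_pow, log_pow]
    push_cast
    ring
  have hw : 2 ≤ ‖y ^ (N + 1)‖ := hnorm ▸ hy.trans (le_self_pow₀ (by linarith) N.succ_ne_zero)
  rw [hV, hmain, ← hnorm]
  calc _ = 2 * |log (1 + c * ‖y ^ (N + 1) - 1‖ ^ 2) - log (c * ‖y ^ (N + 1)‖ ^ 2)| := by
        rw [← abs_two, ← abs_mul, ← abs_neg]
        ring_nf
    _ ≤ 2 * (4 * (1 / c + 3) / ‖y ^ (N + 1)‖) := by gcongr; exact abs_log_ratio_le hc hw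
    _ = 8 * (1 / c + 3) / ‖y ^ (N + 1)‖ := by ring

theorem stmt15 (N : ℕ) (hN : 0 < N) (μ : ℝ) (c : ℝ) (hc : 0 < c)
    (V : ℂ → ℝ)
    (hV : V = fun y => μ - 2 * Real.log (1 + c * ‖y ^ (N + 1) - 1‖ ^ 2)) :
    ∃ C : ℝ, ∀ y : ℂ, 2 ≤ ‖y‖ →
      |V y - (-μ - 4 * (N + 1) * Real.log (‖y‖)
          + Real.log (Real.exp (2 * μ) / c ^ 2))|
        ≤ C / ‖y‖ ^ (N + 1) :=
  stmt15_general N μ c hc V hV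
end

section
/- Suppose g ∈ C²((0,R)) ∩ C¹([0,R)) satisfies g'' + (1/r)g' + h e^{U_h(r)} g = E(r) on (0,R) with g(0) = g'(0) = 0, where h ∈ [1/2, 2], U_h(r) = log(1/(1+hr²/8)²), and |E(r)| ≤ ε(1+r)^{-3}. Then there is an absolute constant C such that |g(r)| ≤ C ε log(2+r) for all r ∈ (0,R). -/
/-!
With `u = h r² / 8`, the homogeneous equation `g'' + g'/r + h e^{U_h} g = 0` has the bounded
solution `g₀₁ = (1 - u)/(1 + u)` and the solution `g₀₂ = g₀₁ (log r + 1) + 1 ~ log r`, whose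
Wronskian `r (g₀₁ g₀₂' - g₀₂ g₀₁')` is identically `1`. Variation of parameters gives the
particular solution `g₀₂ ∫₀ʳ s g₀₁ E - g₀₁ ∫₀ʳ s g₀₂ E`. The difference with `g` solves the
homogeneous equation and tends to `0` at the origin, which forces it to vanish because `g₀₂` is
unbounded there and `g₀₁(0) = 1`. Finally `|s g₀₁ E| ≲ ε (1 + s)⁻²` and
`|s g₀₂ E| ≲ ε (1 + log r) (1 + s)⁻²` on `(0, r]`, so both integrals are `O(ε log (2 + r))`.
-/

open Set Filter Topology MeasureTheory intervalIntegral

def RadialSolOn (c F y y' : ℝ → ℝ) (S : Set ℝ) : Prop :=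
  ∀ r ∈ S, HasDerivAt y (y' r) r ∧ HasDerivAt y' (F r - y' r / r - c r * y r) r

def radialWronskian (y y' z z' : ℝ → ℝ) (r : ℝ) : ℝ := r * (y r * z' r - z r * y' r)

namespace RadialSolOn

variable {c F G y y' z z' w w' : ℝ → ℝ} {S : Set ℝ}

theorem mono {T : Set ℝ} (hy : RadialSolOn c F y y' S) (hT : T ⊆ S) : RadialSolOn c F y y' T :=
  fun r hr => hy r (hT hr)

theorem sub (hy : RadialSolOn c F y y' S) (hz : RadialSolOn c G z z' S) :
    RadialSolOn c (F - G) (y - z) (y' - z') S := fun r hr => by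
  obtain ⟨hy₁, hy₂⟩ := hy r hr
  obtain ⟨hz₁, hz₂⟩ := hz r hr
  refine ⟨hy₁.sub hz₁, (hy₂.sub hz₂).congr_deriv ?_⟩
  simp only [Pi.sub_apply]
  ring

theorem hasDerivAt_radialWronskian (hy : RadialSolOn c 0 y y' S) (hz : RadialSolOn c 0 z z' S)
    {r : ℝ} (hr : r ∈ S) (hr₀ : r ≠ 0) : HasDerivAt (radialWronskian y y' z z') 0 r := by
  obtain ⟨hy₁, hy₂⟩ := hy r hr
  obtain ⟨hz₁, hz₂⟩ := hz r hr
  refine ((hasDerivAt_id r).mul ((hy₁.mul hz₂).sub (hz₁.mul hy₂))).congr_deriv ?_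
  simp only [Pi.zero_apply, Pi.sub_apply, Pi.mul_apply, id]
  field_simp
  ring

theorem exists_eq_add_of_radialWronskian_eq_one (hS : IsOpen S) (hS' : IsPreconnected S)
    (hS₀ : 0 ∉ S) (hy : RadialSolOn c 0 y y' S) (hz : RadialSolOn c 0 z z' S)
    (hW : ∀ r ∈ S, radialWronskian y y' z z' r = 1) (hw : RadialSolOn c 0 w w' S) :
    ∃ α β : ℝ, ∀ r ∈ S, w r = α * y r + β * z r := by
  have hconst : ∀ {u u' v v' : ℝ → ℝ}, RadialSolOn c 0 u u' S → RadialSolOn c 0 v v' S →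
      ∃ a, ∀ r ∈ S, radialWronskian u u' v v' r = a := fun hu hv =>
    hS.exists_is_const_of_deriv_eq_zero hS'
      (fun r hr => (hu.hasDerivAt_radialWronskian hv hr (ne_of_mem_of_not_mem hr hS₀))
        |>.differentiableAt.differentiableWithinAt)
      (fun r hr => (hu.hasDerivAt_radialWronskian hv hr (ne_of_mem_of_not_mem hr hS₀)).deriv)
  obtain ⟨α, hα⟩ := hconst hw hz
  obtain ⟨β, hβ⟩ := hconst hy hw
  refine ⟨α, β, fun r hr => ?_⟩
  have := hW r hr
  rw [← hα r hr, ← hβ r hr]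
  unfold radialWronskian at *
  linear_combination (-w r) * this

theorem variationOfParameters (hy : RadialSolOn c 0 y y' S) (hz : RadialSolOn c 0 z z' S)
    (hW : ∀ r ∈ S, radialWronskian y y' z z' r = 1) {P Q : ℝ → ℝ}
    (hP : ∀ r ∈ S, HasDerivAt P (r * y r * F r) r) (hQ : ∀ r ∈ S, HasDerivAt Q (r * z r * F r) r) :
    RadialSolOn c F (fun t => z t * P t - y t * Q t) (fun t => z' t * P t - y' t * Q t) S :=
  fun r hr => by
  obtain ⟨hy₁, hy₂⟩ := hy r hr
  obtain ⟨hz₁, hz₂⟩ := hz r hr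
  refine ⟨((hz₁.mul (hP r hr)).sub (hy₁.mul (hQ r hr))).congr_deriv (by ring),
    ((hz₂.mul (hP r hr)).sub (hy₂.mul (hQ r hr))).congr_deriv ?_⟩
  have := hW r hr
  unfold radialWronskian at this
  simp only [Pi.zero_apply]
  linear_combination (F r) * this

end RadialSolOn

section ClassicalSolutions

variable {c g E : ℝ → ℝ} {S : Set ℝ}

theorem radialSolOn_of_contDiffOn (hS : IsOpen S) (hg : ContDiffOn ℝ 2 g S)
    (hode : ∀ r ∈ S, deriv (deriv g) r + 1 / r * deriv g r + c r * g r = E r) :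
    RadialSolOn c E g (deriv g) S := fun r hr => by
  have hg' : ContDiffOn ℝ 1 (deriv g) S := hg.deriv_of_isOpen hS (by norm_num)
  refine ⟨((hg.differentiableOn (by norm_num) r hr).differentiableAt (hS.mem_nhds hr)).hasDerivAt,
    ?_⟩
  refine ((hg'.differentiableOn one_ne_zero r hr).differentiableAt
    (hS.mem_nhds hr)).hasDerivAt.congr_deriv ?_
  rw [← hode r hr]
  ring

theorem continuousOn_rhs_of_contDiffOn (hS : IsOpen S) (hS₀ : 0 ∉ S) (hc : ContinuousOn c S)
    (hg : ContDiffOn ℝ 2 g S)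
    (hode : ∀ r ∈ S, deriv (deriv g) r + 1 / r * deriv g r + c r * g r = E r) :
    ContinuousOn E S := by
  have hg' : ContDiffOn ℝ 1 (deriv g) S := hg.deriv_of_isOpen hS (by norm_num)
  refine ContinuousOn.congr ?_ fun r hr => (hode r hr).symm
  exact ((hg'.continuousOn_deriv_of_isOpen hS le_rfl).add
    ((continuousOn_const.div continuousOn_id fun r hr => ne_of_mem_of_not_mem hr hS₀).mul
      hg'.continuousOn)).add (hc.mul hg.continuousOn)

end ClassicalSolutions

theorem ContinuousOn.intervalIntegrable_of_abs_le {f g : ℝ → ℝ} {a b : ℝ} (hab : a ≤ b)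
    (hf : ContinuousOn f (Ioc a b)) (hg : IntervalIntegrable g volume a b)
    (hfg : ∀ s ∈ Ioc a b, |f s| ≤ g s) : IntervalIntegrable f volume a b := by
  refine hg.mono_fun' ?_ ?_ <;> rw [uIoc_of_le hab]
  · exact hf.aestronglyMeasurable measurableSet_Ioc
  · exact ae_restrict_of_forall_mem measurableSet_Ioc hfg

theorem abs_integral_le_of_abs_le_div_one_add_sq {f : ℝ → ℝ} {t C : ℝ} (ht : 0 ≤ t) (hC : 0 ≤ C)
    (hf : ∀ s ∈ Ioc 0 t, |f s| ≤ C / (1 + s) ^ 2) : |∫ s in 0..t, f s| ≤ C := by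
  have hderiv : ∀ s ∈ uIcc 0 t, HasDerivAt (fun u => -C / (1 + u)) (C / (1 + s) ^ 2) s := by
    intro s hs
    rw [uIcc_of_le ht] at hs
    have hs₁ : 1 + s ≠ 0 := by linarith [hs.1]
    refine (((hasDerivAt_id s).const_add 1).inv hs₁).const_mul (-C) |>.congr_deriv ?_
    simp only [id]
    field_simp
  have hint : IntervalIntegrable (fun s => C / (1 + s) ^ 2) volume 0 t :=
    (continuousOn_const.div (by fun_prop) fun s hs => by
      rw [uIcc_of_le ht] at hs; nlinarith [hs.1]).intervalIntegrable
  calc |∫ s in 0..t, f s| ≤ ∫ s in 0..t, C / (1 + s) ^ 2 :=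
        norm_integral_le_of_norm_le (f := f) ht (ae_of_all _ hf) hint
    _ = C - C / (1 + t) := by
        rw [integral_eq_sub_of_hasDerivAt hderiv hint]
        ring
    _ ≤ C := by
        have : 0 ≤ C / (1 + t) := by positivity
        linarith

theorem abs_mul_log_le_one_add_mul_log {s t : ℝ} (hs : 0 < s) (hst : s ≤ t) (ht : 1 ≤ t) :
    |s * Real.log s| ≤ 1 + s * Real.log t := by
  rcases le_or_gt s 1 with hs₁ | hs₁
  · have := Real.abs_log_mul_self_lt s hs hs₁
    have : 0 ≤ s * Real.log t := mul_nonneg hs.le (Real.log_nonneg ht)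
    rw [mul_comm]
    linarith
  · rw [abs_of_nonneg (mul_nonneg hs.le (Real.log_nonneg hs₁.le))]
    nlinarith [Real.log_le_log hs hst]

theorem hasDerivAt_integral_mul_of_abs_le {y b E : ℝ → ℝ} {R ε r : ℝ}
    (hy : ContinuousOn y (Ioo 0 R)) (hb : Continuous b) (hyb : ∀ s ∈ Ioo 0 R, |y s| ≤ b s)
    (hEc : ContinuousOn E (Ioo 0 R)) (hE : ∀ s ∈ Ioo 0 R, |E s| ≤ ε) (hr : r ∈ Ioo 0 R) :
    HasDerivAt (fun t => ∫ s in 0..t, y s * E s) (y r * E r) r := by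
  have hcont : ContinuousOn (fun s => y s * E s) (Ioo 0 R) := hy.mul hEc
  refine integral_hasDerivAt_right ?_ (hcont.stronglyMeasurableAtFilter isOpen_Ioo r hr)
    (hcont.continuousAt (isOpen_Ioo.mem_nhds hr))
  refine (hcont.mono (Ioc_subset_Ioo_right hr.2)).intervalIntegrable_of_abs_le (g := (b · * ε))
    hr.1.le ((hb.mul continuous_const).intervalIntegrable 0 r) fun s hs => ?_
  have hs' : s ∈ Ioo 0 R := ⟨hs.1, hs.2.trans_lt hr.2⟩
  rw [abs_mul]
  exact mul_le_mul (hyb s hs') (hE s hs') (abs_nonneg _) ((abs_nonneg _).trans (hyb s hs'))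

/-- `h e^{U_h(r)}`, where `U_h(r) = log (1 / (1 + h r² / 8)²)`. -/
noncomputable def potential (h r : ℝ) : ℝ := h / (1 + h * r ^ 2 / 8) ^ 2

noncomputable def g₀₁ (h r : ℝ) : ℝ := (1 - h * r ^ 2 / 8) / (1 + h * r ^ 2 / 8)

noncomputable def g₀₁' (h r : ℝ) : ℝ := -(h * r / 2) / (1 + h * r ^ 2 / 8) ^ 2

noncomputable def g₀₂ (h r : ℝ) : ℝ := g₀₁ h r * (Real.log r + 1) + 1

noncomputable def g₀₂' (h r : ℝ) : ℝ := g₀₁' h r * (Real.log r + 1) + g₀₁ h r / r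

section FundamentalSolutions

variable {h : ℝ}

theorem mul_exp_log_eq_potential (hh : 0 ≤ h) (r : ℝ) :
    h * Real.exp (Real.log (1 / (1 + h * r ^ 2 / 8) ^ 2)) = potential h r := by
  rw [Real.exp_log (by positivity), potential, mul_one_div]

theorem continuous_potential (hh : 0 ≤ h) : Continuous (potential h) :=
  continuous_const.div (by fun_prop) fun r => by positivity

theorem hasDerivAt_one_add_mul_sq_div_eight (h r : ℝ) :
    HasDerivAt (fun t : ℝ => 1 + h * t ^ 2 / 8) (h * r / 4) r := by
  refine ((((hasDerivAt_pow 2 r).const_mul h).div_const 8).const_add 1).congr_deriv ?_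
  push_cast
  ring

theorem hasDerivAt_g₀₁ (hh : 0 ≤ h) (r : ℝ) : HasDerivAt (g₀₁ h) (g₀₁' h r) r := by
  have hd : 1 + h * r ^ 2 / 8 ≠ 0 := by positivity
  refine (((((hasDerivAt_pow 2 r).const_mul h).div_const 8).const_sub 1).div
    (hasDerivAt_one_add_mul_sq_div_eight h r) hd).congr_deriv ?_
  simp only [g₀₁']
  field_simp
  ring

theorem radialSolOn_g₀₁ (hh : 0 ≤ h) : RadialSolOn (potential h) 0 (g₀₁ h) (g₀₁' h) {0}ᶜ := by
  intro r hr
  refine ⟨hasDerivAt_g₀₁ hh r, ?_⟩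
  have hd : 1 + h * r ^ 2 / 8 ≠ 0 := by positivity
  have hr₀ : r ≠ 0 := hr
  refine ((((hasDerivAt_id r).const_mul h).div_const 2).neg.div
    ((hasDerivAt_one_add_mul_sq_div_eight h r).pow 2) (pow_ne_zero 2 hd)).congr_deriv ?_
  simp only [g₀₁', g₀₁, potential, Pi.zero_apply, Pi.neg_apply, Pi.pow_apply, id]
  field_simp
  ring

theorem radialSolOn_g₀₂ (hh : 0 ≤ h) : RadialSolOn (potential h) 0 (g₀₂ h) (g₀₂' h) {0}ᶜ := by
  intro r hr
  obtain ⟨h₁, h₂⟩ := radialSolOn_g₀₁ hh r hr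
  have hlog := (Real.hasDerivAt_log hr).add_const 1
  -- the constant `1` in `g₀₂` is not a solution; it is compensated by `2 g₀₁' / r = -potential h`
  refine ⟨((h₁.mul hlog).add_const 1).congr_deriv (by simp only [g₀₂']; ring), ?_⟩
  refine ((h₂.mul hlog).add (h₁.div (hasDerivAt_id r) hr)).congr_deriv ?_
  have hd : 1 + h * r ^ 2 / 8 ≠ 0 := by positivity
  have hr₀ : r ≠ 0 := hr
  simp only [g₀₂', g₀₂, g₀₁', potential, Pi.zero_apply, id]
  field_simp
  ring

theorem radialWronskian_g₀₁_g₀₂ (hh : 0 ≤ h) {r : ℝ} (hr : r ≠ 0) :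
    radialWronskian (g₀₁ h) (g₀₁' h) (g₀₂ h) (g₀₂' h) r = 1 := by
  have hd : 1 + h * r ^ 2 / 8 ≠ 0 := by positivity
  simp only [radialWronskian, g₀₂', g₀₂, g₀₁', g₀₁]
  field_simp
  ring

theorem continuous_g₀₁ (hh : 0 ≤ h) : Continuous (g₀₁ h) :=
  Continuous.div (by fun_prop) (by fun_prop) fun t => by positivity

theorem continuousOn_g₀₂ (hh : 0 ≤ h) : ContinuousOn (g₀₂ h) {0}ᶜ :=
  (((continuous_g₀₁ hh).continuousOn.mul
    (Real.continuousOn_log.add continuousOn_const)).add continuousOn_const)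

theorem abs_g₀₁_le_one (hh : 0 ≤ h) (r : ℝ) : |g₀₁ h r| ≤ 1 := by
  have hd : 0 < 1 + h * r ^ 2 / 8 := by positivity
  have : 0 ≤ h * r ^ 2 := by positivity
  rw [g₀₁, abs_div, abs_of_pos hd, div_le_one hd, abs_le]
  constructor <;> linarith

theorem abs_g₀₂_le (hh : 0 ≤ h) (r : ℝ) : |g₀₂ h r| ≤ |Real.log r| + 2 := by
  have h₁ := abs_g₀₁_le_one hh r
  have h₂ : |Real.log r + 1| ≤ |Real.log r| + 1 := by simpa using abs_add_le (Real.log r) 1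
  calc |g₀₂ h r| ≤ |g₀₁ h r| * |Real.log r + 1| + 1 := by
        simpa [g₀₂, abs_mul] using abs_add_le (g₀₁ h r * (Real.log r + 1)) 1
    _ ≤ 1 * (|Real.log r| + 1) + 1 := by gcongr
    _ = |Real.log r| + 2 := by ring

theorem abs_mul_g₀₁_mul_le {s : ℝ} (hh : 0 ≤ h) (hs : 0 ≤ s) (e : ℝ) :
    |s * g₀₁ h s * e| ≤ s * |e| := by
  rw [abs_mul, abs_mul, abs_of_nonneg hs]
  calc s * |g₀₁ h s| * |e| ≤ s * 1 * |e| := by gcongr; exact abs_g₀₁_le_one hh s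
    _ = s * |e| := by ring

theorem abs_mul_g₀₂_mul_le {s : ℝ} (hh : 0 ≤ h) (hs : 0 ≤ s) (e : ℝ) :
    |s * g₀₂ h s * e| ≤ (|s * Real.log s| + 2 * s) * |e| := by
  rw [abs_mul, abs_mul, abs_mul s, abs_of_nonneg hs]
  have := abs_g₀₂_le hh s
  gcongr
  nlinarith

theorem eq_zero_of_tendsto_add_g₀₂ {α β : ℝ} (hh : 0 ≤ h)
    (hlim : Tendsto (fun t => α * g₀₁ h t + β * g₀₂ h t) (𝓝[>] 0) (𝓝 0)) : α = 0 ∧ β = 0 := by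
  have h₁ : Tendsto (g₀₁ h) (𝓝[>] 0) (𝓝 1) := by
    simpa [g₀₁] using ((continuous_g₀₁ hh).tendsto 0).mono_left nhdsWithin_le_nhds
  have hinv : Tendsto (fun t => (Real.log t)⁻¹) (𝓝[>] 0) (𝓝 0) :=
    Real.tendsto_log_nhdsGT_zero.inv_tendsto_atBot
  -- divided by `log t → -∞`, the combination tends to `β`
  have hβ : β = 0 := by
    have hT := ((h₁.const_mul α).mul hinv).add
      ((h₁.add ((h₁.add_const 1).mul hinv)).const_mul β)
    rw [show α * 1 * 0 + β * (1 + (1 + 1) * 0) = β by ring] at hT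
    refine tendsto_nhds_unique (hT.congr' ?_) (by simpa using hlim.mul hinv)
    filter_upwards [Real.tendsto_log_nhdsGT_zero.eventually_ne_atBot 0] with t ht
    simp only [g₀₂]
    field_simp
    ring
  subst hβ
  exact ⟨tendsto_nhds_unique (by simpa using h₁.const_mul α) (by simpa using hlim), rfl⟩

end FundamentalSolutions

noncomputable def I₁ (h : ℝ) (E : ℝ → ℝ) (t : ℝ) : ℝ := ∫ s in 0..t, s * g₀₁ h s * E s

noncomputable def I₂ (h : ℝ) (E : ℝ → ℝ) (t : ℝ) : ℝ := ∫ s in 0..t, s * g₀₂ h s * E s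

noncomputable def gPart (h : ℝ) (E : ℝ → ℝ) (t : ℝ) : ℝ :=
  g₀₂ h t * I₁ h E t - g₀₁ h t * I₂ h E t

noncomputable def gPart' (h : ℝ) (E : ℝ → ℝ) (t : ℝ) : ℝ :=
  g₀₂' h t * I₁ h E t - g₀₁' h t * I₂ h E t

section ParticularSolution

variable {h R ε t : ℝ} {E : ℝ → ℝ}

theorem radialSolOn_gPart (hh : 0 ≤ h) (hEc : ContinuousOn E (Ioo 0 R))
    (hE : ∀ s ∈ Ioo 0 R, |E s| ≤ ε) :
    RadialSolOn (potential h) E (gPart h E) (gPart' h E) (Ioo 0 R) := by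
  have hS : Ioo 0 R ⊆ {0}ᶜ := fun r hr => hr.1.ne'
  refine ((radialSolOn_g₀₁ hh).mono hS).variationOfParameters ((radialSolOn_g₀₂ hh).mono hS)
    (fun r hr => radialWronskian_g₀₁_g₀₂ hh hr.1.ne') (fun r hr => ?_) (fun r hr => ?_)
  · exact hasDerivAt_integral_mul_of_abs_le (b := id)
      (continuous_id.mul (continuous_g₀₁ hh)).continuousOn continuous_id
      (fun s hs => by simpa using abs_mul_g₀₁_mul_le hh hs.1.le 1) hEc hE hr
  · exact hasDerivAt_integral_mul_of_abs_le (b := fun s => |s * Real.log s| + 2 * s)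
      (continuousOn_id.mul ((continuousOn_g₀₂ hh).mono hS)) (by fun_prop)
      (fun s hs => by simpa using abs_mul_g₀₂_mul_le hh hs.1.le 1) hEc hE hr

theorem abs_gPart_le_of_le_one (hh : 0 ≤ h) (hE : ∀ s ∈ Ioo 0 R, |E s| ≤ ε)
    (ht : t ∈ Ioo 0 R) (ht₁ : t ≤ 1) : |gPart h E t| ≤ 6 * ε * t := by
  have hε : 0 ≤ ε := (abs_nonneg _).trans (hE t ht)
  have hI₁ : |I₁ h E t| ≤ ε * t * t := by
    have := norm_integral_le_of_norm_le_const (a := 0) (b := t) (C := ε * t)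
      (f := fun s => s * g₀₁ h s * E s) fun s hs => by
      rw [uIoc_of_le ht.1.le] at hs
      calc ‖s * g₀₁ h s * E s‖ ≤ s * |E s| := abs_mul_g₀₁_mul_le hh hs.1.le _
        _ ≤ t * ε := mul_le_mul hs.2 (hE s ⟨hs.1, hs.2.trans_lt ht.2⟩) (abs_nonneg _) ht.1.le
        _ = ε * t := mul_comm t ε
    rwa [sub_zero, abs_of_pos ht.1] at this
  have hI₂ : |I₂ h E t| ≤ 3 * ε * t := by
    have := norm_integral_le_of_norm_le_const (a := 0) (b := t) (C := 3 * ε)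
      (f := fun s => s * g₀₂ h s * E s) fun s hs => by
      rw [uIoc_of_le ht.1.le] at hs
      have hlog : |Real.log s * s| < 1 := Real.abs_log_mul_self_lt s hs.1 (hs.2.trans ht₁)
      rw [mul_comm] at hlog
      calc ‖s * g₀₂ h s * E s‖ ≤ (|s * Real.log s| + 2 * s) * |E s| :=
            abs_mul_g₀₂_mul_le hh hs.1.le _
        _ ≤ 3 * |E s| := by gcongr; linarith [hs.2.trans ht₁]
        _ ≤ 3 * ε := by gcongr; exact hE s ⟨hs.1, hs.2.trans_lt ht.2⟩
    rwa [sub_zero, abs_of_pos ht.1] at this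
  have hlog : |Real.log t * t| < 1 := Real.abs_log_mul_self_lt t ht.1 ht₁
  calc |gPart h E t| ≤ |g₀₂ h t| * |I₁ h E t| + |g₀₁ h t| * |I₂ h E t| := by
        simpa [gPart, abs_mul] using abs_sub (g₀₂ h t * I₁ h E t) (g₀₁ h t * I₂ h E t)
    _ ≤ (|Real.log t| + 2) * (ε * t * t) + 1 * (3 * ε * t) := by
        gcongr
        exacts [abs_g₀₂_le hh t, abs_g₀₁_le_one hh t]
    _ ≤ 6 * ε * t := by
        rw [abs_mul, abs_of_pos ht.1] at hlog
        nlinarith [mul_nonneg hε ht.1.le]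

theorem abs_gPart_le_of_one_le (hh : 0 ≤ h) (hE : ∀ s ∈ Ioo 0 R, |E s| ≤ ε / (1 + s) ^ 3)
    (ht : t ∈ Ioo 0 R) (ht₁ : 1 ≤ t) : |gPart h E t| ≤ (2 * Real.log t + 5) * ε := by
  have hε : 0 ≤ ε := by
    have := (abs_nonneg _).trans (hE t ht)
    rwa [le_div_iff₀ (by have := ht.1; positivity), zero_mul] at this
  have hlogt : 0 ≤ Real.log t := Real.log_nonneg ht₁
  have hE' : ∀ s ∈ Ioc 0 t, |E s| ≤ ε / (1 + s) ^ 3 := fun s hs =>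
    hE s ⟨hs.1, hs.2.trans_lt ht.2⟩
  have hI₁ : |I₁ h E t| ≤ ε := by
    refine abs_integral_le_of_abs_le_div_one_add_sq ht.1.le hε fun s hs => ?_
    have hs₀ : 0 < 1 + s := by linarith [hs.1]
    calc |s * g₀₁ h s * E s| ≤ s * (ε / (1 + s) ^ 3) :=
          (abs_mul_g₀₁_mul_le hh hs.1.le _).trans (mul_le_mul_of_nonneg_left (hE' s hs) hs.1.le)
      _ = ε / (1 + s) ^ 2 * (s / (1 + s)) := by field_simp
      _ ≤ ε / (1 + s) ^ 2 * 1 := by gcongr; rw [div_le_one hs₀]; linarith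
      _ = ε / (1 + s) ^ 2 := mul_one _
  have hI₂ : |I₂ h E t| ≤ (3 + Real.log t) * ε := by
    refine abs_integral_le_of_abs_le_div_one_add_sq ht.1.le (by positivity) fun s hs => ?_
    have hs₀ : 0 < 1 + s := by linarith [hs.1]
    have hlog := abs_mul_log_le_one_add_mul_log hs.1 hs.2 ht₁
    calc |s * g₀₂ h s * E s| ≤ (|s * Real.log s| + 2 * s) * (ε / (1 + s) ^ 3) :=
          (abs_mul_g₀₂_mul_le hh hs.1.le _).trans
            (mul_le_mul_of_nonneg_left (hE' s hs) (by have := hs.1; positivity))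
      _ ≤ ((3 + Real.log t) * (1 + s)) * (ε / (1 + s) ^ 3) := by
          gcongr
          nlinarith [hs.1]
      _ = (3 + Real.log t) * ε / (1 + s) ^ 2 := by field_simp
  calc |gPart h E t| ≤ |g₀₂ h t| * |I₁ h E t| + |g₀₁ h t| * |I₂ h E t| := by
        simpa [gPart, abs_mul] using abs_sub (g₀₂ h t * I₁ h E t) (g₀₁ h t * I₂ h E t)
    _ ≤ (Real.log t + 2) * ε + 1 * ((3 + Real.log t) * ε) := by
        gcongr
        · rw [← abs_of_nonneg hlogt]; exact abs_g₀₂_le hh t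
        · exact abs_g₀₁_le_one hh t
    _ = (2 * Real.log t + 5) * ε := by ring

theorem abs_le_of_abs_le_div_one_add_pow (hE : ∀ s ∈ Ioo 0 R, |E s| ≤ ε / (1 + s) ^ 3) :
    ∀ s ∈ Ioo 0 R, |E s| ≤ ε := fun s hs => by
  have hs₀ : (1 : ℝ) ≤ (1 + s) ^ 3 := one_le_pow₀ (by linarith [hs.1])
  have hε : 0 ≤ ε := by
    have := (abs_nonneg _).trans (hE s hs)
    rwa [le_div_iff₀ (by positivity), zero_mul] at this
  exact (hE s hs).trans (div_le_self hε hs₀)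

theorem abs_gPart_le (hh : 0 ≤ h) (hE : ∀ s ∈ Ioo 0 R, |E s| ≤ ε / (1 + s) ^ 3)
    (ht : t ∈ Ioo 0 R) : |gPart h E t| ≤ 11 * ε * Real.log (2 + t) := by
  have hε : 0 ≤ ε := (abs_nonneg _).trans (abs_le_of_abs_le_div_one_add_pow hE t ht)
  have hL : 5 / 8 ≤ Real.log (2 + t) := by
    have := Real.log_le_log two_pos (by linarith [ht.1] : (2 : ℝ) ≤ 2 + t)
    linarith [Real.log_two_gt_d9]
  rcases le_or_gt t 1 with ht₁ | ht₁
  · calc |gPart h E t| ≤ 6 * ε * t :=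
          abs_gPart_le_of_le_one hh (abs_le_of_abs_le_div_one_add_pow hE) ht ht₁
      _ ≤ 11 * ε * Real.log (2 + t) := by nlinarith
  · have := Real.log_le_log ht.1 (by linarith : t ≤ 2 + t)
    calc |gPart h E t| ≤ (2 * Real.log t + 5) * ε := abs_gPart_le_of_one_le hh hE ht ht₁.le
      _ ≤ 11 * ε * Real.log (2 + t) := by nlinarith

theorem tendsto_gPart_nhdsGT_zero (hh : 0 ≤ h) (hR : 0 < R) (hE : ∀ s ∈ Ioo 0 R, |E s| ≤ ε) :
    Tendsto (gPart h E) (𝓝[>] 0) (𝓝 0) := by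
  refine squeeze_zero_norm' ?_ (tendsto_nhdsWithin_of_tendsto_nhds
    (Continuous.tendsto' (continuous_const.mul continuous_id) 0 0 (by simp) :
      Tendsto (fun t => 6 * ε * t) (𝓝 0) (𝓝 0)))
  filter_upwards [Ioo_mem_nhdsGT (lt_min hR one_pos)] with t ht
  exact abs_gPart_le_of_le_one hh hE ⟨ht.1, ht.2.trans_le (min_le_left _ _)⟩
    (ht.2.le.trans (min_le_right _ _))

end ParticularSolution

theorem eqOn_of_tendsto_sub_nhdsGT_zero {h R : ℝ} {g g' y y' E : ℝ → ℝ} (hh : 0 ≤ h)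
    (hg : RadialSolOn (potential h) E g g' (Ioo 0 R))
    (hy : RadialSolOn (potential h) E y y' (Ioo 0 R))
    (hlim : Tendsto (g - y) (𝓝[>] 0) (𝓝 0)) : EqOn g y (Ioo 0 R) := by
  rcases le_or_gt R 0 with hR | hR
  · exact fun r hr => absurd (hr.1.trans hr.2) hR.not_gt
  have hw : RadialSolOn (potential h) 0 (g - y) (g' - y') (Ioo 0 R) := by
    simpa using hg.sub hy
  have hS : Ioo 0 R ⊆ {0}ᶜ := fun r hr => hr.1.ne'
  obtain ⟨α, β, hαβ⟩ := ((radialSolOn_g₀₁ hh).mono hS).exists_eq_add_of_radialWronskian_eq_one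
    isOpen_Ioo isPreconnected_Ioo (fun h₀ => lt_irrefl 0 h₀.1) ((radialSolOn_g₀₂ hh).mono hS)
    (fun r hr => radialWronskian_g₀₁_g₀₂ hh hr.1.ne') hw
  obtain ⟨rfl, rfl⟩ := eq_zero_of_tendsto_add_g₀₂ hh <| hlim.congr' <| by
    filter_upwards [Ioo_mem_nhdsGT hR] with t ht using hαβ t ht
  intro r hr
  simpa [sub_eq_zero] using hαβ r hr

theorem stmt19 :
    ∃ C : ℝ, 0 < C ∧
      ∀ (h R ε : ℝ) (g E : ℝ → ℝ),
        1 / 2 ≤ h → h ≤ 2 → 1 < R → 0 < ε →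
        ContDiffOn ℝ 2 g (Set.Ioo 0 R) →
        ContDiffOn ℝ 1 g (Set.Ico 0 R) →
        g 0 = 0 → deriv g 0 = 0 →
        (∀ r ∈ Set.Ioo (0:ℝ) R,
          deriv (deriv g) r + (1 / r) * deriv g r
            + h * Real.exp (Real.log (1 / (1 + h * r ^ 2 / 8) ^ 2)) * g r = E r) →
        (∀ r ∈ Set.Ioo (0:ℝ) R, |E r| ≤ ε * (1 + r) ^ (-3 : ℤ)) →
        ∀ r ∈ Set.Ioo (0:ℝ) R, |g r| ≤ C * ε * Real.log (2 + r) := by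
  refine ⟨11, by norm_num, fun h R ε g E h₁ _ hR _ hg₂ hg₁ hg₀ _ hode hE r hr => ?_⟩
  have hh : 0 ≤ h := by linarith
  simp_rw [mul_exp_log_eq_potential hh] at hode
  have hE' : ∀ s ∈ Ioo 0 R, |E s| ≤ ε / (1 + s) ^ 3 := by
    simpa [zpow_neg, div_eq_mul_inv] using hE
  have hEε := abs_le_of_abs_le_div_one_add_pow hE'
  have hEc : ContinuousOn E (Ioo 0 R) := continuousOn_rhs_of_contDiffOn isOpen_Ioo
    (fun h₀ => lt_irrefl 0 h₀.1) (continuous_potential hh).continuousOn hg₂ hode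
  have hg₀lim : Tendsto g (𝓝[>] 0) (𝓝 0) := by
    have := hg₁.continuousOn.continuousWithinAt (left_mem_Ico.2 (by linarith : (0 : ℝ) < R))
    rw [ContinuousWithinAt, hg₀] at this
    exact this.mono_left (nhdsWithin_le_of_mem
      (mem_of_superset (Ioo_mem_nhdsGT (by linarith)) Ioo_subset_Ico_self))
  have hlim := hg₀lim.sub (tendsto_gPart_nhdsGT_zero hh (by linarith) hEε)
  rw [sub_zero] at hlim
  rw [eqOn_of_tendsto_sub_nhdsGT_zero hh (radialSolOn_of_contDiffOn isOpen_Ioo hg₂ hode)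
    (radialSolOn_gPart hh hEc hEε) hlim hr]
  exact abs_gPart_le hh hE' hr
end
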